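/- arXiv:2104.11166 — 6 statements merged into one kernel-verified Lean document; each statement's English description precedes it below -/
import Mathlib

section
/- For a word w = w_1…w_n in S_n, a function f' : [n] → ℕ is called w-compatible if f'(w_1) ≥ f'(w_2) ≥ … ≥ f'(w_n) and f'(w_i) > f'(w_{i+1}) whenever w_i > w_{i+1}. Then every weakly decreasing-along-some-linear-order function arising from a (P,ω)-partition is w-compatible for exactly one linear extension w of (P,ω); that is, the set of (P,ω)-partitions is the disjoint union over w ∈ L(P,ω) of the sets S_w of functions f with f' w-compatible. -/
open Finset Polynomial
open scoped Classical

/-- The set of linear extensions of a finite poset `P`, i.e. order-preserving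
bijections `P ≃ Fin n`. -/
noncomputable def linExts (P : Type) [Fintype P] [PartialOrder P] (n : ℕ) :
    Finset (P ≃ Fin n) :=
  Finset.univ.filter fun f => ∀ x y : P, x ≤ y → f x ≤ f y

/-- The word of a linear extension `f` with respect to the labeling `ω`. -/
def word {P : Type} {n : ℕ} (ω : P → ℕ) (f : P ≃ Fin n) : Fin n → ℕ :=
  fun i => ω (f.symm i)

/-- The major index of a word: the sum of the (1-indexed) descent positions. -/
def majW {n : ℕ} (w : Fin n → ℕ) : ℕ :=
  ∑ i : Fin n, if h : (i : ℕ) + 1 < n then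
    (if w ⟨(i : ℕ) + 1, h⟩ < w i then (i : ℕ) + 1 else 0) else 0

/-- The number of inversions of a word. -/
noncomputable def invW {n : ℕ} (w : Fin n → ℕ) : ℕ :=
  ((Finset.univ : Finset (Fin n × Fin n)).filter
    (fun p => p.1 < p.2 ∧ w p.2 < w p.1)).card

/-- Major index `q`-analogue of the number of linear extensions of `(P, ω)`. -/
noncomputable def eMaj (P : Type) [Fintype P] [PartialOrder P] (ω : P → ℕ) :
    Polynomial ℤ :=
  ∑ f ∈ linExts P (Fintype.card P), Polynomial.X ^ majW (word ω f)

/-- Inversion `q`-analogue of the number of linear extensions of `(P, ω)`. -/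
noncomputable def eInv (P : Type) [Fintype P] [PartialOrder P] (ω : P → ℕ) :
    Polynomial ℤ :=
  ∑ f ∈ linExts P (Fintype.card P), Polynomial.X ^ invW (word ω f)

/-- Major index `q`-analogue of linear extensions whose last letter is the label
of an element of `S`. -/
noncomputable def eMajEndIn (P : Type) [Fintype P] [PartialOrder P]
    (ω : P → ℕ) (S : Set P) : Polynomial ℤ :=
  ∑ f ∈ (linExts P (Fintype.card P)).filter (fun f => ∃ s ∈ S, ∀ x, f x ≤ f s),
    Polynomial.X ^ majW (word ω f)

/-- The Gaussian binomial coefficient `[n choose k]_q`, defined by the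
`q`-Pascal recurrence. -/
noncomputable def qBinom : ℕ → ℕ → Polynomial ℤ
  | _, 0 => 1
  | 0, _ + 1 => 0
  | n + 1, k + 1 => qBinom n k + Polynomial.X ^ (k + 1) * qBinom n (k + 1)

/-- `(P,ω)`-partition. -/
def IsPPart {α : Type} [PartialOrder α] (ω : α → ℕ) (f : α → ℕ) : Prop :=
  ∀ s t : α, s ≤ t → f t ≤ f s ∧ (ω t < ω s → f t < f s)

/-- `(P,ω;s)`-partition. -/
def IsPPartS {α : Type} [PartialOrder α] (ω : α → ℕ) (s : α) (f : α → ℕ) : Prop :=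
  IsPPart ω f ∧ (∀ t, f s ≤ f t) ∧ ∀ t, t ≠ s → f s = f t → ω t < ω s

/-- Generating function by size for the maps `α → ℕ` satisfying `pred`. -/
noncomputable def GPart (α : Type) [Fintype α] (pred : (α → ℕ) → Prop) :
    PowerSeries ℚ :=
  PowerSeries.mk fun m => (Set.ncard {f : α → ℕ | pred f ∧ ∑ t, f t = m} : ℚ)

/-- `f'` is `w`-compatible: `f'(w_1) ≥ f'(w_2) ≥ ⋯ ≥ f'(w_n)` with strict
inequality `f'(w_i) > f'(w_{i+1})` whenever `w_i > w_{i+1}`. -/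
def WCompatible {n : ℕ} (f' : Fin n → ℕ) (w : Equiv.Perm (Fin n)) : Prop :=
  ∀ (i : ℕ) (h : i + 1 < n),
    f' (w ⟨i + 1, h⟩) ≤ f' (w ⟨i, by omega⟩) ∧
      (w ⟨i + 1, h⟩ < w ⟨i, by omega⟩ → f' (w ⟨i + 1, h⟩) < f' (w ⟨i, by omega⟩))

/-!
Order `P` by decreasing value of `f`, breaking ties by increasing label `ω`. This is a linear
order, and `f'` is `w`-compatible for `w = ω ∘ g⁻¹` exactly when `g` lists `P` in this order
(the strict-descent condition is precisely the tie-break), so only the sorting bijection can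
qualify. Comparing the same two conditions on pairs `s < t` instead of on neighbours, `f` is a
`(P,ω)`-partition exactly when this order extends that of `P`, i.e. when the sorting bijection
is a linear extension.
-/

lemma Fin.strictMono_iff_forall_lt_succ {n : ℕ} {β : Type*} [Preorder β] {F : Fin n → β} :
    StrictMono F ↔ ∀ (i : ℕ) (h : i + 1 < n), F ⟨i, by omega⟩ < F ⟨i + 1, h⟩ := by
  cases n with
  | zero => exact iff_of_true (fun i => i.elim0) (fun i h => by omega)
  | succ m =>
    rw [Fin.strictMono_iff_lt_succ]
    exact ⟨fun h i hi => h ⟨i, by omega⟩, fun h i => h i (by omega)⟩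

lemma existsUnique_equiv_fin_strictMono_comp_symm {α β : Type*} [Fintype α] [LinearOrder β]
    {n : ℕ} (hn : Fintype.card α = n) {e : α → β} (he : Function.Injective e) :
    ∃! g : α ≃ Fin n, StrictMono (e ∘ g.symm) := by
  let : LinearOrder α := LinearOrder.lift' e he
  have he_strictMono : StrictMono e := fun _ _ h => h
  refine ⟨(monoEquivOfFin α hn).symm.toEquiv,
    he_strictMono.comp (monoEquivOfFin α hn).strictMono, ?_⟩
  intro g hg
  have hg' : StrictMono g.symm := fun _ _ h => hg h
  -- an order isomorphism between finite linear orders is unique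
  have hsymm : hg'.orderIsoOfSurjective g.symm g.symm.surjective = monoEquivOfFin α hn :=
    Subsingleton.elim _ _
  have h : g.symm = (monoEquivOfFin α hn).toEquiv :=
    Equiv.ext fun i => DFunLike.congr_fun hsymm i
  rw [← Equiv.symm_symm g, h]
  rfl

lemma mem_linExts_iff_monotone {P : Type} [Fintype P] [PartialOrder P] {n : ℕ} {g : P ≃ Fin n} :
    g ∈ linExts P n ↔ Monotone g := by
  simp [linExts, Monotone]

lemma mem_linExts_iff_strictMono {P : Type} {β : Type*} [Fintype P] [PartialOrder P]
    [LinearOrder β] {n : ℕ} {e : P → β} {g : P ≃ Fin n} (hg : StrictMono (e ∘ g.symm)) :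
    g ∈ linExts P n ↔ StrictMono e := by
  have hlt : ∀ x y, e x < e y ↔ g x < g y := fun x y => by
    simpa using hg.lt_iff_lt (a := g x) (b := g y)
  rw [mem_linExts_iff_monotone]
  refine ⟨fun hmono x y hxy => (hlt x y).2 ((hmono hxy.le).lt_of_ne (g.injective.ne hxy.ne)),
    fun he x y hxy => ?_⟩
  rcases hxy.eq_or_lt with rfl | hxy
  · exact le_rfl
  · exact ((hlt x y).1 (he hxy)).le

section PartitionKey

variable {P : Type}

def partitionKey (ω f : P → ℕ) (x : P) : Lex (ℕᵒᵈ × ℕ) :=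
  toLex (OrderDual.toDual (f x), ω x)

variable {ω f : P → ℕ}

lemma partitionKey_lt_iff {x y : P} :
    partitionKey ω f x < partitionKey ω f y ↔ f y < f x ∨ f x = f y ∧ ω x < ω y :=
  Prod.Lex.lt_iff

lemma partitionKey_injective (hω : Function.Injective ω) :
    Function.Injective (partitionKey ω f) :=
  fun _ _ h => hω (congrArg (fun p => (ofLex p).2) h)

lemma partitionKey_lt_iff_of_ne {x y : P} (hxy : ω x ≠ ω y) :
    partitionKey ω f x < partitionKey ω f y ↔ f y ≤ f x ∧ (ω y < ω x → f y < f x) := by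
  rw [partitionKey_lt_iff]
  omega

lemma isPPart_iff_strictMono_partitionKey [PartialOrder P] (hω : Function.Injective ω) :
    IsPPart ω f ↔ StrictMono (partitionKey ω f) := by
  refine ⟨fun hf s t hst => (partitionKey_lt_iff_of_ne (hω.ne hst.ne)).2 (hf s t hst.le),
    fun hf s t hst => ?_⟩
  rcases hst.eq_or_lt with rfl | hst
  · exact ⟨le_rfl, fun h => absurd h (lt_irrefl _)⟩
  · exact (partitionKey_lt_iff_of_ne (hω.ne hst.ne)).1 (hf hst)

lemma wCompatible_iff_strictMono_partitionKey {n : ℕ} (ω g : P ≃ Fin n) (f : P → ℕ) :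
    WCompatible (fun i => f (ω.symm i)) (g.symm.trans ω) ↔
      StrictMono (partitionKey (fun x => (ω x : ℕ)) f ∘ g.symm) := by
  rw [Fin.strictMono_iff_forall_lt_succ]
  refine forall₂_congr fun i hi => ?_
  have hne : g.symm ⟨i, by omega⟩ ≠ g.symm ⟨i + 1, hi⟩ := g.symm.injective.ne (by simp)
  rw [Function.comp_apply, Function.comp_apply, partitionKey_lt_iff_of_ne
    (ω := fun x => (ω x : ℕ)) (Fin.val_injective.ne (ω.injective.ne hne))]
  simp only [Equiv.trans_apply, Equiv.symm_apply_apply, Fin.lt_def]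

end PartitionKey

/-- The fundamental lemma of `(P,ω)`-partitions: `f` is a `(P,ω)`-partition if
and only if `f'` is `w`-compatible for exactly one linear extension
`w = ω ∘ g⁻¹` of the labeled poset `(P,ω)`. -/
theorem pPartition_iff_unique_compatible_linExt (P : Type) [Fintype P]
    [PartialOrder P] (n : ℕ) (hn : Fintype.card P = n) (ω : P ≃ Fin n)
    (f : P → ℕ) :
    IsPPart (fun x => (ω x : ℕ)) f ↔
      ∃! w : Equiv.Perm (Fin n),
        (∃ g ∈ linExts P n, w = g.symm.trans ω) ∧
          WCompatible (fun i => f (ω.symm i)) w := by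
  have hω : Function.Injective fun x => (ω x : ℕ) := Fin.val_injective.comp ω.injective
  rw [isPPart_iff_strictMono_partitionKey hω]
  constructor
  · intro hkey
    obtain ⟨g, hg, hg_unique⟩ :=
      existsUnique_equiv_fin_strictMono_comp_symm hn (partitionKey_injective (f := f) hω)
    refine ⟨g.symm.trans ω, ⟨⟨g, (mem_linExts_iff_strictMono hg).2 hkey, rfl⟩,
      (wCompatible_iff_strictMono_partitionKey ω g f).2 hg⟩, ?_⟩
    rintro _ ⟨⟨g', -, rfl⟩, hg'⟩
    rw [hg_unique g' ((wCompatible_iff_strictMono_partitionKey ω g' f).1 hg')]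
  · rintro ⟨_, ⟨⟨g, hg, rfl⟩, hcompat⟩, -⟩
    exact (mem_linExts_iff_strictMono
      ((wCompatible_iff_strictMono_partitionKey ω g f).1 hcompat)).1 hg
end

section
/- Let (P,ω) be a labeled poset of size n and fix s ∈ P. A function f : P → ℕ is a (P,ω;s)-partition if and only if f' (defined by f'(i) = f(ω^{-1}(i))) is w-compatible for some linear extension w ∈ L(P,ω) that ends with the letter ω(s); moreover these sets S_w are pairwise disjoint, so A(P,ω;s) = ⨆_{w ∈ L(P,ω;s)} S_w. -/
open Finset Polynomial
open scoped Classical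

/-! Sort `P` by the key `x ↦ (f x, ω x)`, with `f` decreasing and the label increasing; since `ω`
is injective this is a linear order. The permutation `ω ∘ g⁻¹` is compatible with `f'` exactly when
`g : P ≃ Fin (n + 1)` lists `P` in increasing key order, so exactly one `g` qualifies. That `g` is a
linear extension iff the key is monotone on `P`, which is the `(P,ω)`-partition condition, and it
ends at `s` iff `s` has the largest key, which is the extra condition of a `(P,ω;s)`-partition. -/

namespace PPartition

def key {α : Type} (κ : α → ℕ) (f : α → ℕ) (x : α) : ℕᵒᵈ ×ₗ ℕ :=
  toLex (OrderDual.toDual (f x), κ x)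

section Key

variable {α : Type} {κ f : α → ℕ} {x y : α}

lemma key_lt_key_iff : key κ f x < key κ f y ↔ f y < f x ∨ f x = f y ∧ κ x < κ y := by
  simp only [key, Prod.Lex.toLex_lt_toLex, OrderDual.toDual_lt_toDual, OrderDual.toDual_inj]

lemma key_le_key_iff : key κ f x ≤ key κ f y ↔ f y < f x ∨ f x = f y ∧ κ x ≤ κ y := by
  simp only [key, Prod.Lex.toLex_le_toLex, OrderDual.toDual_lt_toDual, OrderDual.toDual_inj]

lemma key_injective (hκ : Function.Injective κ) : Function.Injective (key κ f) :=
  fun _ _ h => hκ (congrArg (fun p => (ofLex p).2) h)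

lemma isPPart_iff_monotone_key [PartialOrder α] : IsPPart κ f ↔ Monotone (key κ f) := by
  refine forall₂_congr fun x y => imp_congr_right fun hxy => ?_
  rw [key_le_key_iff]
  rcases eq_or_ne x y with rfl | hne
  · simp
  constructor
  · rintro ⟨hle, hlt⟩
    rcases hle.lt_or_eq with h | h
    · exact Or.inl h
    · exact Or.inr ⟨h.symm, not_lt.1 fun h' => (hlt h').ne h⟩
  · rintro (h | ⟨h, h'⟩)
    · exact ⟨h.le, fun _ => h⟩
    · exact ⟨h.ge, fun h'' => absurd h' (not_le.2 h'')⟩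

lemma isPPartS_iff_monotone_key [PartialOrder α] (hκ : Function.Injective κ) (s : α) :
    IsPPartS κ s f ↔ Monotone (key κ f) ∧ ∀ t, key κ f t ≤ key κ f s := by
  rw [IsPPartS, isPPart_iff_monotone_key, ← forall_and]
  refine and_congr_right fun _ => forall_congr' fun t => ?_
  rw [key_le_key_iff]
  rcases eq_or_ne t s with rfl | hne
  · simp
  constructor
  · rintro ⟨hle, hlt⟩
    rcases hle.lt_or_eq with h | h
    · exact Or.inl h
    · exact Or.inr ⟨h.symm, (hlt hne h).le⟩
  · rintro (h | ⟨h, h'⟩)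
    · exact ⟨h.le, fun _ h'' => absurd h'' h.ne⟩
    · exact ⟨h.ge, fun _ _ => h'.lt_of_ne (hκ.ne hne)⟩

end Key

theorem existsUnique_equiv_fin_strictMono {α L : Type*} [Fintype α] [LinearOrder L]
    {k : α → L} (hk : Function.Injective k) {m : ℕ} (hm : Fintype.card α = m) :
    ∃! g : α ≃ Fin m, StrictMono (k ∘ g.symm) := by
  set T := univ.image k
  have hT : T.card = m := by rw [card_image_of_injective _ hk, card_univ, hm]
  let e := T.orderIsoOfFin hT
  let r : α ≃ T := Equiv.ofBijective (fun x => ⟨k x, mem_image_of_mem k (mem_univ x)⟩)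
    ⟨fun x y h => hk (congrArg Subtype.val h), fun ⟨y, hy⟩ => by
      obtain ⟨x, -, rfl⟩ := mem_image.1 hy
      exact ⟨x, rfl⟩⟩
  let g := r.trans e.symm.toEquiv
  have hg : k ∘ g.symm = fun i => (e i : L) :=
    funext fun i => congrArg Subtype.val (r.apply_symm_apply (e i))
  have hmono : StrictMono (k ∘ g.symm) := by
    rw [hg]
    exact fun i j hij => e.strictMono hij
  refine ⟨g, hmono, fun g' hg' => ?_⟩
  have hrange : k ∘ g'.symm = k ∘ g.symm := (hg'.range_inj hmono).1 (by
    rw [g'.symm.surjective.range_comp, g.symm.surjective.range_comp])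
  exact Equiv.symm_bijective.injective (Equiv.ext fun i => hk (congrFun hrange i))

lemma wCompatible_iff_strictMono {n : ℕ} (f' : Fin n → ℕ) (w : Equiv.Perm (Fin n)) :
    WCompatible f' w ↔ StrictMono (key Fin.val f' ∘ w) := by
  have hstep : ∀ a b : Fin n, a ≠ b →
      (f' b ≤ f' a ∧ (b < a → f' b < f' a) ↔
        key Fin.val f' a < key Fin.val f' b) := by
    intro a b hab
    rw [key_lt_key_iff, Fin.lt_def]
    have := Fin.val_ne_of_ne hab
    omega
  rcases n with _ | n
  · exact ⟨fun _ i => i.elim0, fun _ i h => absurd h (by omega)⟩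
  rw [Fin.strictMono_iff_lt_succ]
  constructor
  · intro h i
    exact (hstep _ _ (w.injective.ne (Fin.castSucc_lt_succ (i := i)).ne)).1 (h i i.succ.isLt)
  · intro h i hi
    have hne := w.injective.ne (Fin.castSucc_lt_succ (i := ⟨i, by omega⟩)).ne
    exact (hstep _ _ hne).2 (h ⟨i, by omega⟩)

lemma wCompatible_symm_trans_iff {P : Type} {n : ℕ} (ω g : P ≃ Fin n) (f : P → ℕ) :
    WCompatible (fun i => f (ω.symm i)) (g.symm.trans ω) ↔
      StrictMono (key (fun x => (ω x : ℕ)) f ∘ g.symm) := by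
  rw [wCompatible_iff_strictMono]
  simp [key, Function.comp_def]

section Sorted

variable {P L : Type} [LinearOrder L] {k : P → L}

lemma le_iff_of_strictMono_comp_symm {m : ℕ} {g : P ≃ Fin m} (hg : StrictMono (k ∘ g.symm))
    (x y : P) : g x ≤ g y ↔ k x ≤ k y := by
  simpa using (hg.le_iff_le (a := g x) (b := g y)).symm

lemma mem_linExts_iff_monotone [Fintype P] [PartialOrder P] {m : ℕ} {g : P ≃ Fin m}
    (hg : StrictMono (k ∘ g.symm)) :
    g ∈ linExts P m ↔ Monotone k := by
  simp only [linExts, mem_filter, mem_univ, true_and, le_iff_of_strictMono_comp_symm hg]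
  rfl

lemma eq_last_iff_forall_le {n : ℕ} {g : P ≃ Fin (n + 1)} (hg : StrictMono (k ∘ g.symm))
    (s : P) :
    g s = Fin.last n ↔ ∀ t, k t ≤ k s := by
  simp only [← le_iff_of_strictMono_comp_symm hg]
  refine ⟨fun h t => h ▸ Fin.le_last _, fun h => ?_⟩
  simpa using h (g.symm (Fin.last n))

end Sorted

end PPartition

open PPartition in
/-- The fundamental lemma for `(P,ω;s)`-partitions: `f` is a `(P,ω;s)`-partition
if and only if `f'` is `w`-compatible for exactly one linear extension `w` of
`(P,ω)` ending with the letter `ω(s)`; in particular the sets `S_w` for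
`w ∈ L(P,ω;s)` are pairwise disjoint and cover `A(P,ω;s)`. -/
theorem pPartitionS_iff_unique_compatible_linExt_ending (P : Type) [Fintype P]
    [PartialOrder P] (n : ℕ) (hn : Fintype.card P = n + 1)
    (ω : P ≃ Fin (n + 1)) (s : P) (f : P → ℕ) :
    IsPPartS (fun x => (ω x : ℕ)) s f ↔
      ∃! w : Equiv.Perm (Fin (n + 1)),
        ((∃ g ∈ linExts P (n + 1), w = g.symm.trans ω) ∧ w (Fin.last n) = ω s) ∧
          WCompatible (fun i => f (ω.symm i)) w := by
  have hκ : Function.Injective fun x => (ω x : ℕ) := Fin.val_injective.comp ω.injective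
  have hlast (g : P ≃ Fin (n + 1)) :
      (g.symm.trans ω) (Fin.last n) = ω s ↔ g s = Fin.last n := by
    rw [Equiv.trans_apply, ω.apply_eq_iff_eq, Equiv.symm_apply_eq, eq_comm]
  obtain ⟨g₀, hg₀, huniq⟩ := existsUnique_equiv_fin_strictMono (key_injective (f := f) hκ) hn
  rw [isPPartS_iff_monotone_key hκ]
  constructor
  · rintro ⟨hmono, hmax⟩
    refine ⟨g₀.symm.trans ω, ⟨⟨⟨g₀, (mem_linExts_iff_monotone hg₀).2 hmono, rfl⟩,
      (hlast g₀).2 ((eq_last_iff_forall_le hg₀ s).2 hmax)⟩,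
      (wCompatible_symm_trans_iff ω g₀ f).2 hg₀⟩, ?_⟩
    rintro _ ⟨⟨⟨g, -, rfl⟩, -⟩, hg⟩
    rw [huniq g ((wCompatible_symm_trans_iff ω g f).1 hg)]
  · rintro ⟨_, ⟨⟨⟨g, hlin, rfl⟩, hs⟩, hg⟩, -⟩
    rw [wCompatible_symm_trans_iff] at hg
    exact ⟨(mem_linExts_iff_monotone hg).1 hlin, (eq_last_iff_forall_le hg s).1 ((hlast g).1 hs)⟩
end

section
/- For a labeled poset (P,ω) of size p, the generating function G_{P,ω}(q) = Σ_{f ∈ A(P,ω)} q^{|f|}, where |f| = Σ_{t∈P} f(t), equals (Σ_{σ ∈ L(P,ω)} q^{maj(σ)}) / ∏_{i=1}^{p} (1 − q^i), as formal power series in q. -/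
/-!
Order `P` by the key `x ↦ (-f x, ω x)`, compared lexicographically. A map `f` is a
`(P,ω)`-partition exactly when this key is monotone on `P`; since `ω` is injective the key
then sorts `P` into a unique linear extension `e`, and `f ∘ e⁻¹` is weakly decreasing, strictly
at the descents of the word `ω ∘ e⁻¹`. Subtracting from its `i`-th entry the number of descents
at positions `≥ i` turns these sequences bijectively into all weakly decreasing sequences,
lowering the size by `maj`. Weakly decreasing sequences of length `p` have generating function
`∏ 1/(1 - q^i)`: split on whether the last entry is `0`, and otherwise subtract `1` everywhere.
-/

open Finset Polynomial
open scoped Classical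

section GeneratingFunction

variable {α : Type} [Fintype α]

theorem finite_setOf_sum_eq (pred : (α → ℕ) → Prop) (m : ℕ) :
    {f : α → ℕ | pred f ∧ ∑ t, f t = m}.Finite :=
  (Set.Finite.pi (t := fun _ : α => Set.Iic m) fun _ => Set.finite_Iic m).subset
    fun _ ⟨_, hf⟩ t _ => hf ▸ single_le_sum (fun _ _ => Nat.zero_le _) (mem_univ t)

theorem GPart_eq_X_pow_mul {β : Type} [Fintype β] {pred : (α → ℕ) → Prop}
    {pred' : (β → ℕ) → Prop} (φ : (β → ℕ) → α → ℕ) (k : ℕ) (hφ : Function.Injective φ)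
    (hpred : ∀ f, pred f ↔ ∃ g, pred' g ∧ φ g = f) (hsum : ∀ g, ∑ t, φ g t = ∑ t, g t + k) :
    GPart α pred = PowerSeries.X ^ k * GPart β pred' := by
  ext m
  have himage : {f : α → ℕ | pred f ∧ ∑ t, f t = m} =
      φ '' {g : β → ℕ | pred' g ∧ ∑ t, g t + k = m} := by
    ext f
    simp only [Set.mem_ofPred_eq, Set.mem_image, hpred]
    constructor
    · rintro ⟨⟨g, hg, rfl⟩, hm⟩
      exact ⟨g, ⟨hg, hsum g ▸ hm⟩, rfl⟩
    · rintro ⟨g, ⟨hg, hm⟩, rfl⟩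
      exact ⟨⟨g, hg, rfl⟩, hsum g ▸ hm⟩
  rw [GPart, PowerSeries.coeff_mk, himage, Set.ncard_image_of_injective _ hφ,
    PowerSeries.coeff_X_pow_mul', GPart]
  split_ifs with hk
  · rw [PowerSeries.coeff_mk]
    congr 2
    ext g
    exact and_congr_right fun _ => by omega
  · have hempty : {g : β → ℕ | pred' g ∧ ∑ t, g t + k = m} = ∅ :=
      Set.eq_empty_of_forall_notMem fun g hg => hk (hg.2 ▸ Nat.le_add_left k _)
    rw [hempty, Set.ncard_empty, Nat.cast_zero]

theorem GPart_eq_of_injective {β : Type} [Fintype β] {pred : (α → ℕ) → Prop}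
    {pred' : (β → ℕ) → Prop} (φ : (β → ℕ) → α → ℕ) (hφ : Function.Injective φ)
    (hpred : ∀ f, pred f ↔ ∃ g, pred' g ∧ φ g = f) (hsum : ∀ g, ∑ t, φ g t = ∑ t, g t) :
    GPart α pred = GPart β pred' := by
  simpa using GPart_eq_X_pow_mul φ 0 hφ hpred hsum

theorem GPart_and_add_GPart_and_not (pred r : (α → ℕ) → Prop) :
    GPart α (fun f => pred f ∧ r f) + GPart α (fun f => pred f ∧ ¬r f) = GPart α pred := by
  ext m
  simp only [GPart, map_add, PowerSeries.coeff_mk]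
  rw [← Nat.cast_add, ← Set.ncard_union_eq _ (finite_setOf_sum_eq _ m)
    (finite_setOf_sum_eq _ m)]
  · congr 2
    ext f
    simp only [Set.mem_union, Set.mem_ofPred_eq]
    tauto
  · exact Set.disjoint_left.2 fun f hf hf' => hf'.1.2 hf.1.2

theorem GPart_exists_mem_eq_sum {ι : Type} (s : Finset ι) (pred : ι → (α → ℕ) → Prop)
    (hdisj : ∀ f, ∀ i ∈ s, ∀ j ∈ s, pred i f → pred j f → i = j) :
    GPart α (fun f => ∃ i ∈ s, pred i f) = ∑ i ∈ s, GPart α (pred i) := by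
  ext m
  have hunion : {f : α → ℕ | (∃ i ∈ s, pred i f) ∧ ∑ t, f t = m} =
      ⋃ i ∈ (s : Set ι), {f | pred i f ∧ ∑ t, f t = m} := by
    ext f
    simp only [Set.mem_ofPred_eq, Set.mem_iUnion, mem_coe, exists_prop]
    tauto
  rw [map_sum]
  simp only [GPart, PowerSeries.coeff_mk]
  rw [hunion, s.finite_toSet.ncard_biUnion (fun i _ => finite_setOf_sum_eq _ m),
    finsum_mem_coe_finset, Nat.cast_sum]
  exact fun i hi j hj hij =>
    Set.disjoint_left.2 fun f hfi hfj => hij (hdisj f i hi j hj hfi.1 hfj.1)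

end GeneratingFunction

theorem antitone_snoc_zero_iff {q : ℕ} (g : Fin q → ℕ) :
    Antitone (Fin.snoc g 0 : Fin (q + 1) → ℕ) ↔ Antitone g := by
  constructor
  · intro h i j hij
    simpa using h (Fin.castSucc_le_castSucc_iff.2 hij)
  · intro h i j hij
    induction j using Fin.lastCases with
    | last => simp
    | cast j =>
      induction i using Fin.lastCases with
      | last => exact absurd hij (not_le.2 (Fin.castSucc_lt_last j))
      | cast i => simpa using h (Fin.castSucc_le_castSucc_iff.1 hij)

theorem GPart_antitone_succ (q : ℕ) :
    GPart (Fin (q + 1)) Antitone =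
      GPart (Fin q) Antitone + PowerSeries.X ^ (q + 1) * GPart (Fin (q + 1)) Antitone := by
  conv_lhs => rw [← GPart_and_add_GPart_and_not Antitone (fun f => f (Fin.last q) = 0)]
  congr 1
  · refine GPart_eq_of_injective (fun g => Fin.snoc g 0)
      (fun g g' h => by simpa using congrArg Fin.init h) (fun f => ⟨?_, ?_⟩)
      (fun g => by simp [Fin.sum_univ_castSucc])
    · rintro ⟨hf, hlast⟩
      refine ⟨Fin.init f, ?_, by rw [← hlast, Fin.snoc_init_self]⟩
      rwa [← antitone_snoc_zero_iff, ← hlast, Fin.snoc_init_self]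
    · rintro ⟨g, hg, rfl⟩
      exact ⟨(antitone_snoc_zero_iff g).2 hg, by simp⟩
  · refine GPart_eq_X_pow_mul (fun g i => g i + 1) (q + 1)
      (fun g g' h => funext fun i => by simpa using congrFun h i) (fun f => ⟨?_, ?_⟩)
      (fun g => by simp [sum_add_distrib])
    · rintro ⟨hf, hlast⟩
      refine ⟨fun i => f i - 1, fun i j hij => Nat.sub_le_sub_right (hf hij) 1,
        funext fun i => Nat.sub_add_cancel ?_⟩
      exact (Nat.one_le_iff_ne_zero.2 hlast).trans (hf (Fin.le_last i))
    · rintro ⟨g, hg, rfl⟩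
      exact ⟨fun i j hij => Nat.add_le_add_right (hg hij) 1, Nat.succ_ne_zero _⟩

theorem GPart_antitone_mul_prod (q : ℕ) :
    GPart (Fin q) Antitone * ∏ i ∈ range q, (1 - PowerSeries.X ^ (i + 1)) = 1 := by
  induction q with
  | zero =>
    ext m
    rcases eq_or_ne m 0 with rfl | hm
    · simp [GPart, Subsingleton.antitone]
    · simp [GPart, hm, hm.symm]
  | succ q ih =>
    have hstep : GPart (Fin (q + 1)) Antitone * (1 - PowerSeries.X ^ (q + 1)) =
        GPart (Fin q) Antitone := by
      linear_combination GPart_antitone_succ q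
    rw [prod_range_succ, mul_comm _ (1 - _), ← mul_assoc, hstep, ih]

theorem prod_one_sub_X_pow_inv (q : ℕ) :
    (∏ i ∈ range q, (1 - PowerSeries.X ^ (i + 1) : PowerSeries ℚ))⁻¹ = GPart (Fin q) Antitone :=
  ((PowerSeries.eq_inv_iff_mul_eq_one (by simp)).2 (GPart_antitone_mul_prod q)).symm

section LexKey

variable {α : Type}

/-- `StrictMono (lexKey w g)` says that `g` is weakly decreasing, strictly so at each descent
of the injective word `w`. -/
def lexKey (ω f : α → ℕ) (x : α) : ℕᵒᵈ ×ₗ ℕ := toLex (OrderDual.toDual (f x), ω x)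

variable {ω f : α → ℕ} {x y : α}

theorem lexKey_le_lexKey_iff :
    lexKey ω f x ≤ lexKey ω f y ↔ f y < f x ∨ f y = f x ∧ ω x ≤ ω y := by
  simp [lexKey, Prod.Lex.toLex_le_toLex, eq_comm]

theorem lexKey_lt_lexKey_iff :
    lexKey ω f x < lexKey ω f y ↔ f y < f x ∨ f y = f x ∧ ω x < ω y := by
  simp [lexKey, Prod.Lex.toLex_lt_toLex, eq_comm]

end LexKey

theorem strictMono_fin_iff {β : Type*} [Preorder β] {n : ℕ} {f : Fin n → β} :
    StrictMono f ↔ ∀ i (h : i + 1 < n), f ⟨i, by omega⟩ < f ⟨i + 1, h⟩ := by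
  cases n with
  | zero => simp [Subsingleton.strictMono]
  | succ n =>
    rw [Fin.strictMono_iff_lt_succ]
    exact ⟨fun hf i hi => hf ⟨i, by omega⟩, fun hf i => hf i (by omega)⟩

theorem antitone_fin_iff {β : Type*} [Preorder β] {n : ℕ} {f : Fin n → β} :
    Antitone f ↔ ∀ i (h : i + 1 < n), f ⟨i + 1, h⟩ ≤ f ⟨i, by omega⟩ := by
  cases n with
  | zero => simp [Subsingleton.antitone]
  | succ n =>
    rw [Fin.antitone_iff_succ_le]
    exact ⟨fun hf i hi => hf ⟨i, by omega⟩, fun hf i => hf i (by omega)⟩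

section Descents

variable {n : ℕ}

def descentInd (w : Fin n → ℕ) (j : Fin n) : ℕ :=
  if h : (j : ℕ) + 1 < n then (if w ⟨j + 1, h⟩ < w j then 1 else 0) else 0

def descentsFrom (w : Fin n → ℕ) (i : ℕ) : ℕ :=
  ∑ j : Fin n, if i ≤ (j : ℕ) then descentInd w j else 0

variable (w : Fin n → ℕ)

theorem majW_eq_sum_descentInd : majW w = ∑ j : Fin n, ((j : ℕ) + 1) * descentInd w j := by
  unfold majW descentInd
  refine sum_congr rfl fun j _ => ?_
  split_ifs <;> simp

theorem sum_descentsFrom : ∑ i : Fin n, descentsFrom w i = majW w := by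
  rw [majW_eq_sum_descentInd]
  unfold descentsFrom
  rw [sum_comm]
  refine sum_congr rfl fun j _ => ?_
  simp [Fin.le_iff_val_le_val.symm, ← sum_filter, filter_ge_eq_Iic]

theorem descentsFrom_eq_add {i : ℕ} (h : i + 1 < n) :
    descentsFrom w i = descentInd w ⟨i, by omega⟩ + descentsFrom w (i + 1) := by
  unfold descentsFrom
  rw [← Fintype.sum_ite_eq' (⟨i, by omega⟩ : Fin n) (descentInd w), ← sum_add_distrib]
  refine sum_congr rfl fun j _ => ?_
  split_ifs <;> simp_all [Fin.ext_iff] <;> omega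

theorem descentsFrom_eq_zero {i : ℕ} (h : n ≤ i + 1) : descentsFrom w i = 0 :=
  sum_eq_zero fun j _ => by
    unfold descentInd
    split_ifs <;> first | rfl | omega

end Descents

section CompatibleSequences

variable {n : ℕ} {w : Fin n → ℕ}

theorem lexKey_lt_lexKey_succ_iff (hw : Function.Injective w) (g : Fin n → ℕ) {i : ℕ}
    (h : i + 1 < n) :
    lexKey w g ⟨i, by omega⟩ < lexKey w g ⟨i + 1, h⟩ ↔
      g ⟨i + 1, h⟩ + descentInd w ⟨i, by omega⟩ ≤ g ⟨i, by omega⟩ := by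
  have hne : w ⟨i, by omega⟩ ≠ w ⟨i + 1, h⟩ := fun he => by simpa using hw he
  rw [lexKey_lt_lexKey_iff, descentInd, dif_pos h]
  dsimp only
  split_ifs <;> omega

theorem strictMono_lexKey_iff_antitone (hw : Function.Injective w) (g : Fin n → ℕ) :
    StrictMono (lexKey w g) ↔ Antitone fun i : Fin n => (g i : ℤ) - descentsFrom w i := by
  rw [strictMono_fin_iff, antitone_fin_iff]
  refine forall₂_congr fun i h => ?_
  rw [lexKey_lt_lexKey_succ_iff hw g h, descentsFrom_eq_add w h]
  push_cast
  omega

theorem strictMono_lexKey_iff (hw : Function.Injective w) (g : Fin n → ℕ) :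
    StrictMono (lexKey w g) ↔
      ∃ h : Fin n → ℕ, Antitone h ∧ (fun i => h i + descentsFrom w i) = g := by
  rw [strictMono_lexKey_iff_antitone hw]
  constructor
  · intro hanti
    have hle : ∀ i : Fin n, descentsFrom w i ≤ g i := fun i => by
      have hi := i.isLt
      have := hanti (show i ≤ ⟨n - 1, by omega⟩ from Fin.le_iff_val_le_val.2 (by simp; omega))
      simp only [descentsFrom_eq_zero w (by omega : n ≤ n - 1 + 1)] at this
      omega
    refine ⟨fun i => g i - descentsFrom w i, fun i j hij => ?_,
      funext fun i => Nat.sub_add_cancel (hle i)⟩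
    have := hanti hij
    have := hle i
    have := hle j
    simp only at *
    omega
  · rintro ⟨h, hh, rfl⟩ i j hij
    have := hh hij
    push_cast
    omega

theorem GPart_strictMono_lexKey (hw : Function.Injective w) :
    GPart (Fin n) (fun g => StrictMono (lexKey w g)) =
      PowerSeries.X ^ majW w * GPart (Fin n) Antitone :=
  GPart_eq_X_pow_mul (fun (h : Fin n → ℕ) (i : Fin n) => h i + descentsFrom w i) (majW w)
    (fun h h' he => funext fun i => by simpa using congrFun he i) (strictMono_lexKey_iff hw)
    (fun h => by rw [sum_add_distrib, sum_descentsFrom])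

end CompatibleSequences

section LinearExtensions

theorem isPPart_iff_monotone_lexKey {α : Type} [PartialOrder α] (ω f : α → ℕ) :
    IsPPart ω f ↔ Monotone (lexKey ω f) := by
  constructor
  · intro h s t hst
    have := h s t hst
    rw [lexKey_le_lexKey_iff]
    omega
  · intro h s t hst
    have := lexKey_le_lexKey_iff.1 (h hst)
    omega

theorem lexKey_injective {α : Type} {ω : α → ℕ} (hω : Function.Injective ω) (f : α → ℕ) :
    Function.Injective (lexKey ω f) :=
  fun _ _ h => hω (congrArg (fun k => (ofLex k).2) h)

variable {p : ℕ}

theorem exists_equiv_fin_strictMono_comp_symm {α β : Type*} [Fintype α] [LinearOrder β]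
    {key : α → β} (hkey : Function.Injective key) (hp : Fintype.card α = p) :
    ∃ e : α ≃ Fin p, StrictMono (key ∘ e.symm) := by
  let ε := Fintype.equivFinOfCardEq hp
  let σ := Tuple.sort (key ∘ ε.symm)
  exact ⟨ε.trans σ.symm, (Tuple.monotone_sort (key ∘ ε.symm)).strictMono_of_injective
    (hkey.comp (ε.symm.injective.comp σ.injective))⟩

theorem eq_of_strictMono_comp_symm {α β : Type*} [Preorder β] {key : α → β}
    {e e' : α ≃ Fin p} (he : StrictMono (key ∘ e.symm)) (he' : StrictMono (key ∘ e'.symm)) :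
    e = e' := by
  have hmono : StrictMono (e' ∘ e.symm) :=
    fun i j hij => he'.lt_iff_lt.1 (by simpa using he hij)
  refine Equiv.ext fun x => ?_
  simpa using (congrFun hmono.eq_id (e x)).symm

variable {P : Type} [Fintype P] [PartialOrder P] {ω : P → ℕ}

theorem isPPart_iff_exists_linExts (hp : Fintype.card P = p) (hω : Function.Injective ω)
    (f : P → ℕ) :
    IsPPart ω f ↔ ∃ e ∈ linExts P p, StrictMono (lexKey ω f ∘ e.symm) := by
  rw [isPPart_iff_monotone_lexKey]
  constructor
  · intro hmono
    obtain ⟨e, he⟩ := exists_equiv_fin_strictMono_comp_symm (lexKey_injective hω f) hp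
    refine ⟨e, mem_filter.2 ⟨mem_univ _, fun x y hxy => he.le_iff_le.1 ?_⟩, he⟩
    simpa using hmono hxy
  · rintro ⟨e, he, hstrict⟩ x y hxy
    simpa using hstrict.monotone ((mem_filter.1 he).2 x y hxy)

theorem GPart_isPPart_eq_sum (hp : Fintype.card P = p) (hω : Function.Injective ω) :
    GPart P (IsPPart ω) =
      ∑ e ∈ linExts P p, GPart (Fin p) (fun g => StrictMono (lexKey (word ω e) g)) := by
  rw [funext fun f => propext (isPPart_iff_exists_linExts hp hω f),
    GPart_exists_mem_eq_sum (linExts P p) (fun e f => StrictMono (lexKey ω f ∘ e.symm))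
      fun f e _ e' _ he he' => eq_of_strictMono_comp_symm he he']
  refine sum_congr rfl fun e _ =>
    GPart_eq_of_injective (fun g => g ∘ e) e.surjective.injective_comp_right
      (fun f => ⟨fun hf => ⟨f ∘ e.symm, hf, by ext; simp⟩, ?_⟩) (fun g => e.sum_comp g)
  rintro ⟨g, hg, rfl⟩
  convert hg using 1
  ext i
  simp [lexKey, word]

end LinearExtensions

/-- Stanley's theorem: the generating function of `(P,ω)`-partitions by size
equals the major-index `q`-analogue of linear extensions divided by
`∏_{i=1}^p (1 - q^i)`. -/
theorem GPart_eq_eMaj_div_prod (P : Type) [Fintype P] [PartialOrder P]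
    (p : ℕ) (hp : Fintype.card P = p) (ω : P ≃ Fin p) :
    GPart P (IsPPart (fun x => (ω x : ℕ))) =
      (∑ f ∈ linExts P p,
          (PowerSeries.X : PowerSeries ℚ) ^ majW (word (fun x => (ω x : ℕ)) f)) *
        (∏ i ∈ Finset.range p,
            (1 - (PowerSeries.X : PowerSeries ℚ) ^ (i + 1)))⁻¹ := by
  have hω : Function.Injective fun x => (ω x : ℕ) := Fin.val_injective.comp ω.injective
  rw [GPart_isPPart_eq_sum hp hω, prod_one_sub_X_pow_inv, sum_mul]
  exact sum_congr rfl fun e _ => GPart_strictMono_lexKey (hω.comp e.symm.injective)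
end

section
/- Let (P+Q,ω) be a labeled disjoint union of posets with |P+Q| = n, |P| = p, and fix s ∈ P such that ω(s) > ω(t) for all t ∈ Q. Then e_q^{maj}(P+Q; s) = [n−1 choose p−1]_q · e_q^{maj}(P; s) · e_q^{maj}(Q), where e_q^{maj}(R; s) = Σ_{σ ∈ L(R,ω) ending with ω(s)} q^{maj(σ)}. -/
open Finset Polynomial
open scoped Classical

noncomputable def qfacP : ℕ → Polynomial ℤ
  | 0 => 1
  | m + 1 => qfacP m * (1 - Polynomial.X ^ (m + 1))

lemma qBinom_zero_right (n : ℕ) : qBinom n 0 = 1 := by cases n <;> rfl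

lemma qBinom_big : ∀ n k : ℕ, n < k → qBinom n k = 0 := by
  intro n
  induction n with
  | zero => intro k hk; match k, hk with | k+1, _ => rfl
  | succ n ih =>
    intro k hk
    match k, hk with
    | k+1, hk =>
      show qBinom n k + Polynomial.X ^ (k+1) * qBinom n (k+1) = 0
      rw [ih k (by omega), ih (k+1) (by omega)]; ring

lemma qBinom_self : ∀ n : ℕ, qBinom n n = 1 := by
  intro n
  induction n with
  | zero => rfl
  | succ n ih =>
    show qBinom n n + Polynomial.X ^ (n+1) * qBinom n (n+1) = 1
    rw [ih, qBinom_big n (n+1) (by omega)]; ring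

lemma qfac_identity : ∀ N a b : ℕ, a + b = N →
    qBinom (a + b) a * (qfacP a * qfacP b) = qfacP (a + b) := by
  intro N
  induction N using Nat.strong_induction_on with
  | _ N ih =>
    intro a b hab
    match a, b with
    | 0, b => simp [qBinom_zero_right, qfacP]
    | a+1, 0 => simp [qBinom_self, qfacP]
    | a+1, b+1 =>
      have key : qBinom (a+1+(b+1)) (a+1)
          = qBinom (a+(b+1)) a + Polynomial.X ^ (a+1) * qBinom (a+(b+1)) (a+1) := by
        have : a+1+(b+1) = (a+(b+1))+1 := by omega
        rw [this]; rfl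
      have h1 : qBinom (a + (b+1)) a * (qfacP a * qfacP (b+1)) = qfacP (a + (b+1)) :=
        ih (a + (b+1)) (by omega) a (b+1) rfl
      have h2 : qBinom ((a+1) + b) (a+1) * (qfacP (a+1) * qfacP b) = qfacP ((a+1) + b) :=
        ih ((a+1) + b) (by omega) (a+1) b rfl
      have e1 : a + (b+1) = (a+1) + b := by omega
      have e2 : (a+1) + (b+1) = ((a+1)+b) + 1 := by omega
      have hf1 : qfacP (a+1) = qfacP a * (1 - Polynomial.X ^ (a+1)) := rfl
      have hf2 : qfacP (b+1) = qfacP b * (1 - Polynomial.X ^ (b+1)) := rfl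
      rw [e2]
      show _ = qfacP ((a+1)+b) * (1 - Polynomial.X ^ ((a+1)+b+1))
      rw [e1] at h1; rw [e1] at key; rw [e2] at key; rw [key]
      calc (qBinom ((a+1)+b) a + Polynomial.X ^ (a+1) * qBinom ((a+1)+b) (a+1)) *
            (qfacP (a+1) * qfacP (b+1))
          = (qBinom ((a+1)+b) a * (qfacP a * qfacP (b+1))) * (1 - Polynomial.X ^ (a+1))
            + Polynomial.X ^ (a+1) * ((qBinom ((a+1)+b) (a+1) * (qfacP (a+1) * qfacP b))
              * (1 - Polynomial.X ^ (b+1))) := by rw [hf1, hf2]; ring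
        _ = qfacP ((a+1)+b) * (1 - Polynomial.X ^ (a+1))
            + Polynomial.X ^ (a+1) * (qfacP ((a+1)+b) * (1 - Polynomial.X ^ (b+1))) := by
              rw [h1, h2]
        _ = qfacP ((a+1)+b) * (1 - Polynomial.X ^ ((a+1)+b+1)) := by
              have : ((a+1)+b+1) = (a+1) + (b+1) := by omega
              rw [this, pow_add]; ring

noncomputable def gf (A : Type*) (w : A → ℕ) : PowerSeries ℤ :=
  PowerSeries.mk fun m => (Nat.card {a : A // w a = m} : ℤ)

lemma gf_congr {A B : Type*} {wA : A → ℕ} {wB : B → ℕ} (e : A ≃ B)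
    (h : ∀ a, wB (e a) = wA a) : gf A wA = gf B wB := by
  ext m
  simp only [gf, PowerSeries.coeff_mk, Nat.cast_inj]
  exact Nat.card_congr (Equiv.subtypeEquiv e (fun a => by rw [h a]))

lemma nat_card_sigma {ι : Type*} [Fintype ι] (T : ι → Type*) [∀ i, Finite (T i)] :
    Nat.card (Σ i, T i) = ∑ i, Nat.card (T i) := by
  letI : ∀ i, Fintype (T i) := fun i => Fintype.ofFinite _
  simp [Nat.card_eq_fintype_card]

lemma finite_slice {α : Type*} [Fintype α] {A : Type*} (v : A → α → ℕ)
    (hv : Function.Injective v) (w : A → ℕ) (hw : ∀ f t, v f t ≤ w f) (m : ℕ) :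
    Finite {f : A // w f = m} := by
  apply Finite.of_injective (fun f : {f : A // w f = m} => fun t => (⟨v f.1 t, by
    have := hw f.1 t; rw [f.2] at this; omega⟩ : Fin (m+1)))
  intro f g hfg
  apply Subtype.ext; apply hv; funext t
  have := congrFun hfg t
  simpa [Fin.mk.injEq] using this

lemma gf_mul {A B : Type*} (wA : A → ℕ) (wB : B → ℕ)
    (hA : ∀ m, Finite {a : A // wA a = m}) (hB : ∀ m, Finite {b : B // wB b = m}) :
    gf (A × B) (fun x => wA x.1 + wB x.2) = gf A wA * gf B wB := by
  ext m
  rw [PowerSeries.coeff_mul]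
  simp only [gf, PowerSeries.coeff_mk]
  have key : Nat.card {x : A × B // wA x.1 + wB x.2 = m}
      = ∑ p ∈ Finset.HasAntidiagonal.antidiagonal m, Nat.card {a : A // wA a = p.1} * Nat.card {b : B // wB b = p.2} := by
    have e : {x : A × B // wA x.1 + wB x.2 = m}
        ≃ Σ p : (Finset.HasAntidiagonal.antidiagonal m : Finset (ℕ × ℕ)),
            ({a : A // wA a = p.1.1} × {b : B // wB b = p.1.2}) := by
      refine Equiv.ofBijective (fun x => ⟨⟨(wA x.1.1, wB x.1.2), Finset.HasAntidiagonal.mem_antidiagonal.mpr x.2⟩,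
        (⟨x.1.1, rfl⟩, ⟨x.1.2, rfl⟩)⟩) ⟨?_, ?_⟩
      · intro x x' h
        apply Subtype.ext
        have := congrArg (fun y : (Σ p : (Finset.HasAntidiagonal.antidiagonal m : Finset (ℕ × ℕ)),
            ({a : A // wA a = p.1.1} × {b : B // wB b = p.1.2})) =>
            ((y.2.1.1 : A), (y.2.2.1 : B))) h
        simpa using this
      · rintro ⟨⟨⟨i, j⟩, hp⟩, ⟨⟨a, ha⟩, ⟨b, hb⟩⟩⟩
        have ha' : i = wA a := ha.symm
        have hb' : j = wB b := hb.symm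
        subst ha'; subst hb'
        exact ⟨⟨(a, b), Finset.HasAntidiagonal.mem_antidiagonal.mp hp⟩, rfl⟩
    rw [Nat.card_congr e]
    haveI : ∀ p : (Finset.HasAntidiagonal.antidiagonal m : Finset (ℕ × ℕ)),
        Finite ({a : A // wA a = p.1.1} × {b : B // wB b = p.1.2}) := by
      intro p; haveI := hA p.1.1; haveI := hB p.1.2; infer_instance
    rw [nat_card_sigma]
    rw [← Finset.sum_attach (Finset.HasAntidiagonal.antidiagonal m)
      (fun p => Nat.card {a : A // wA a = p.1} * Nat.card {b : B // wB b = p.2})]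
    exact Finset.sum_congr rfl (fun p _ => Nat.card_prod _ _)
  rw [key]
  push_cast
  rfl

lemma nat_card_sigma_finset {ι : Type*} (s : Finset ι) (T : ι → Type*) [∀ i, Finite (T i)] :
    Nat.card (Σ i : s, T i) = ∑ i ∈ s, Nat.card (T i) := by
  rw [nat_card_sigma]
  exact Finset.sum_coe_sort s (fun i => Nat.card (T i))

lemma gf_shift {A : Type*} (w : A → ℕ) (c : ℕ) :
    gf A (fun a => w a + c) = (PowerSeries.X : PowerSeries ℤ) ^ c * gf A w := by
  ext m
  rw [PowerSeries.coeff_X_pow_mul']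
  simp only [gf, PowerSeries.coeff_mk]
  split_ifs with h
  · exact congrArg _ (Nat.card_congr (Equiv.subtypeEquivRight (fun a => by omega)))
  · have : IsEmpty {a : A // w a + c = m} := ⟨fun x => by have := x.2; omega⟩
    simp [Nat.card_of_isEmpty]

lemma card_mul_slice (a m : ℕ) (ha : 0 < a) :
    Nat.card {t : ℕ // a * t = m} = if a ∣ m then 1 else 0 := by
  split_ifs with h
  · obtain ⟨c, rfl⟩ := h
    have e : {t : ℕ // a * t = a * c} ≃ Unit :=
      ⟨fun _ => Unit.unit, fun _ => ⟨c, rfl⟩,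
       fun t => Subtype.ext (Nat.eq_of_mul_eq_mul_left ha t.2).symm,
       fun _ => rfl⟩
    rw [Nat.card_congr e]; simp
  · have : IsEmpty {t : ℕ // a * t = m} := ⟨fun x => h ⟨x.1, x.2.symm⟩⟩
    simp [Nat.card_of_isEmpty]

lemma finite_mul_slice (a m : ℕ) (ha : 0 < a) : Finite {t : ℕ // a * t = m} := by
  apply Finite.of_injective (fun t : {t : ℕ // a * t = m} => (⟨t.1, by
    have h := t.2
    have : t.1 ≤ a * t.1 := Nat.le_mul_of_pos_left _ ha
    omega⟩ : Fin (m+1)))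
  intro x y h
  apply Subtype.ext
  simpa [Fin.mk.injEq] using h

lemma gf_geom (a : ℕ) (ha : 0 < a) :
    gf ℕ (fun t => a * t) * (1 - (PowerSeries.X : PowerSeries ℤ) ^ a) = 1 := by
  ext m
  rw [mul_sub, mul_one, map_sub, PowerSeries.coeff_mul_X_pow', PowerSeries.coeff_one]
  simp only [gf, PowerSeries.coeff_mk, card_mul_slice a _ ha]
  by_cases h0 : m = 0
  · subst h0
    simp [(by omega : ¬ a ≤ 0)]
    omega
  · by_cases hle : a ≤ m
    · have : a ∣ m ↔ a ∣ m - a := by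
        constructor
        · intro h; exact (Nat.dvd_sub h (dvd_refl a))
        · intro h; have := Nat.dvd_add h (dvd_refl a); rwa [Nat.sub_add_cancel hle] at this
      rw [if_pos hle]; simp only [← this]; simp [h0]
    · have hnd : ¬ a ∣ m := fun h => hle (Nat.le_of_dvd (by omega) h)
      simp [hle, h0, hnd]

lemma gf_pi : ∀ (k : ℕ) (a : Fin k → ℕ), (∀ i, 0 < a i) →
    gf (Fin k → ℕ) (fun d => ∑ i, a i * d i) *
      ∏ i, (1 - (PowerSeries.X : PowerSeries ℤ) ^ a i) = 1 := by
  intro k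
  induction k with
  | zero =>
    intro a _
    have h1 : gf (Fin 0 → ℕ) (fun d => ∑ i, a i * d i) = 1 := by
      ext m
      simp only [gf, PowerSeries.coeff_mk, Finset.univ_eq_empty, Finset.sum_empty]
      rcases Nat.eq_zero_or_pos m with rfl | hm
      · rw [PowerSeries.coeff_zero_eq_constantCoeff, PowerSeries.constantCoeff_one]
        have : Nat.card {d : Fin 0 → ℕ // (0:ℕ) = 0} = 1 := by
          rw [Nat.card_eq_one_iff_unique]
          exact ⟨⟨fun x y => Subtype.ext (funext (fun i => i.elim0))⟩, ⟨⟨fun i => i.elim0, rfl⟩⟩⟩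
        rw [this]; norm_num
      · have : IsEmpty {d : Fin 0 → ℕ // (0:ℕ) = m} := ⟨fun x => absurd x.2 (by omega)⟩
        rw [PowerSeries.coeff_one]
        simp [Nat.card_of_isEmpty, (by omega : ¬ m = 0)]
        omega
    rw [h1]; simp
  | succ k ih =>
    intro a ha
    have he : gf (Fin (k+1) → ℕ) (fun d => ∑ i, a i * d i)
        = gf (ℕ × (Fin k → ℕ)) (fun x => a 0 * x.1 + ∑ i, a i.succ * x.2 i) := by
      apply gf_congr (⟨fun d => (d 0, fun i => d i.succ), fun x => Fin.cons x.1 x.2,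
        fun d => funext (fun i => Fin.cases rfl (fun j => rfl) i),
        fun x => by simp⟩ : (Fin (k+1) → ℕ) ≃ ℕ × (Fin k → ℕ))
      intro d
      simp only [Equiv.coe_fn_mk, Fin.sum_univ_succ]
    have hB : ∀ m, Finite {d : Fin k → ℕ // (∑ i, a i.succ * d i) = m} := by
      intro m
      apply finite_slice (id : (Fin k → ℕ) → (Fin k → ℕ)) Function.injective_id
      intro d t
      calc d t ≤ a t.succ * d t := Nat.le_mul_of_pos_left _ (ha t.succ)
        _ ≤ ∑ i, a i.succ * d i :=
          Finset.single_le_sum (f := fun i => a i.succ * d i) (fun i _ => Nat.zero_le _) (Finset.mem_univ t)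
    have hmul := gf_mul (fun t : ℕ => a 0 * t) (fun d : Fin k → ℕ => ∑ i, a i.succ * d i)
      (fun m => finite_mul_slice (a 0) m (ha 0)) hB
    rw [he, hmul, Fin.prod_univ_succ]
    have := ih (fun i => a i.succ) (fun i => ha i.succ)
    calc gf ℕ (fun t => a 0 * t) * gf (Fin k → ℕ) (fun d => ∑ i, a i.succ * d i) *
          ((1 - (PowerSeries.X : PowerSeries ℤ) ^ a 0) * ∏ i : Fin k, (1 - (PowerSeries.X : PowerSeries ℤ) ^ a i.succ))
        = (gf ℕ (fun t => a 0 * t) * (1 - (PowerSeries.X : PowerSeries ℤ) ^ a 0)) *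
          (gf (Fin k → ℕ) (fun d => ∑ i, a i.succ * d i) *
            ∏ i : Fin k, (1 - (PowerSeries.X : PowerSeries ℤ) ^ a i.succ)) := by ring
      _ = 1 := by rw [gf_geom (a 0) (ha 0), this, one_mul]


-- downward induction on Fin n
lemma fin_rev_induction {n : ℕ} (M : Fin n → Prop)
    (hlast : ∀ i : Fin n, (i : ℕ) + 1 = n → M i)
    (hstep : ∀ i : Fin n, ∀ h : (i : ℕ) + 1 < n, M ⟨(i : ℕ) + 1, h⟩ → M i) : ∀ i, M i := by
  have key : ∀ k : ℕ, ∀ i : Fin n, n - (i : ℕ) ≤ k + 1 → M i := by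
    intro k
    induction k with
    | zero =>
      intro i hi
      exact hlast i (by have := i.isLt; omega)
    | succ k ih =>
      intro i hi
      by_cases h : (i : ℕ) + 1 < n
      · exact hstep i h (ih ⟨(i : ℕ) + 1, h⟩ (by simp; omega))
      · exact hlast i (by have := i.isLt; omega)
  intro i
  exact key n i (by have := i.isLt; omega)

lemma antitone_of_adj {n : ℕ} {g : Fin n → ℕ}
    (h : ∀ i : Fin n, ∀ hi : (i : ℕ) + 1 < n, g ⟨(i : ℕ) + 1, hi⟩ ≤ g i) : Antitone g := by
  have key : ∀ k : ℕ, ∀ i j : Fin n, (j : ℕ) = (i : ℕ) + k → g j ≤ g i := by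
    intro k
    induction k with
    | zero => intro i j hj; have : i = j := Fin.ext (by omega); rw [this]
    | succ k ih =>
      intro i j hj
      have hk : (i : ℕ) + k + 1 < n := by have := j.isLt; omega
      have hk' : (i : ℕ) + k < n := by omega
      have step := h ⟨(i : ℕ) + k, hk'⟩ (by simpa using hk)
      have : g j = g ⟨(i : ℕ) + k + 1, hk⟩ := by congr 1; exact Fin.ext (by simp; omega)
      rw [this]
      exact le_trans step (ih i ⟨(i : ℕ) + k, hk'⟩ (by simp))
  intro i j hij
  exact key ((j : ℕ) - (i : ℕ)) i j (by have := Fin.le_def.mp hij; omega)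

noncomputable def tailsum {n : ℕ} (d : Fin n → ℕ) (i : Fin n) : ℕ :=
  ∑ j, if i ≤ j then d j else 0

lemma tailsum_last {n : ℕ} (d : Fin n → ℕ) (i : Fin n) (hi : (i : ℕ) + 1 = n) :
    tailsum d i = d i := by
  rw [tailsum, Finset.sum_eq_single i]
  · simp
  · intro j _ hj
    have hij : ¬ i ≤ j := by
      intro hle
      exact hj (Fin.ext (by have := Fin.le_def.mp hle; have := j.isLt; omega))
    simp [hij]
  · simp

lemma tailsum_adj {n : ℕ} (d : Fin n → ℕ) (i : Fin n) (h : (i : ℕ) + 1 < n) :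
    tailsum d i = d i + tailsum d ⟨(i : ℕ) + 1, h⟩ := by
  unfold tailsum
  have : ∀ j : Fin n, (if i ≤ j then d j else 0)
      = (if j = i then d j else 0) + (if (⟨(i : ℕ) + 1, h⟩ : Fin n) ≤ j then d j else 0) := by
    intro j
    by_cases h1 : j = i
    · subst h1
      simp [Fin.le_def, le_refl]
    · have h2 : (i ≤ j) ↔ ((⟨(i : ℕ) + 1, h⟩ : Fin n) ≤ j) := by
        rw [Fin.le_def, Fin.le_def]
        simp only []
        constructor
        · intro hle
          have : (i : ℕ) ≠ (j : ℕ) := fun hh => h1 (Fin.ext hh.symm)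
          omega
        · intro hle; omega
      by_cases h3 : i ≤ j
      · simp [h3, h1, h2.mp h3]
      · have h4 : ¬ ((⟨(i : ℕ) + 1, h⟩ : Fin n) ≤ j) := fun hc => h3 (h2.mpr hc)
        simp [h3, h1, h4]
  rw [Finset.sum_congr rfl (fun j _ => this j), Finset.sum_add_distrib,
    Finset.sum_ite_eq' Finset.univ i d]
  simp

lemma sum_tailsum {n : ℕ} (d : Fin n → ℕ) :
    ∑ i, tailsum d i = ∑ j : Fin n, ((j : ℕ) + 1) * d j := by
  unfold tailsum
  rw [Finset.sum_comm]
  apply Finset.sum_congr rfl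
  intro j _
  rw [Finset.sum_ite, Finset.sum_const, Finset.sum_const_zero, add_zero]
  have hf : (Finset.univ.filter (fun i : Fin n => i ≤ j)) = Finset.Iic j := by
    ext i; simp
  rw [hf, Fin.card_Iic]
  simp [mul_comm]


def CompatW {n : ℕ} (w g : Fin n → ℕ) : Prop :=
  ∀ i : Fin n, ∀ h : (i : ℕ) + 1 < n,
    g ⟨(i : ℕ) + 1, h⟩ ≤ g i ∧ (w ⟨(i : ℕ) + 1, h⟩ < w i → g ⟨(i : ℕ) + 1, h⟩ < g i)

noncomputable def dstep {n : ℕ} (w : Fin n → ℕ) (i : Fin n) : ℕ :=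
  if h : (i : ℕ) + 1 < n then (if w ⟨(i : ℕ) + 1, h⟩ < w i then 1 else 0) else 0

noncomputable def csh {n : ℕ} (w : Fin n → ℕ) : Fin n → ℕ := tailsum (dstep w)

lemma majW_eq_sum_dstep {n : ℕ} (w : Fin n → ℕ) :
    majW w = ∑ j : Fin n, ((j : ℕ) + 1) * dstep w j := by
  unfold majW dstep
  apply Finset.sum_congr rfl
  intro j _
  split_ifs <;> simp

lemma sum_csh {n : ℕ} (w : Fin n → ℕ) : ∑ i, csh w i = majW w := by
  rw [csh, sum_tailsum, majW_eq_sum_dstep]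

lemma compat_step {n : ℕ} {w g : Fin n → ℕ} (hc : CompatW w g) (i : Fin n)
    (h : (i : ℕ) + 1 < n) : g ⟨(i : ℕ) + 1, h⟩ + dstep w i ≤ g i := by
  have h2 := hc i h
  unfold dstep
  rw [dif_pos h]
  split_ifs with hd
  · have := h2.2 hd; omega
  · have := h2.1; omega

lemma csh_le_of_compat {n : ℕ} {w g : Fin n → ℕ} (hc : CompatW w g) : ∀ i, csh w i ≤ g i := by
  apply fin_rev_induction
  · intro i hi
    rw [csh, tailsum_last _ _ hi]
    unfold dstep
    rw [dif_neg (by omega)]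
    omega
  · intro i h ih
    rw [csh, tailsum_adj _ _ h]
    have := compat_step hc i h
    have := ih
    rw [csh] at ih
    omega

lemma csh_adj {n : ℕ} (w : Fin n → ℕ) (i : Fin n) (h : (i : ℕ) + 1 < n) :
    csh w i = dstep w i + csh w ⟨(i : ℕ) + 1, h⟩ := tailsum_adj _ _ h

lemma csh_last {n : ℕ} (w : Fin n → ℕ) (i : Fin n) (hi : (i : ℕ) + 1 = n) :
    csh w i = 0 := by
  rw [csh, tailsum_last _ _ hi]
  unfold dstep
  rw [dif_neg (by omega)]

noncomputable def compatEquiv {n : ℕ} (w : Fin n → ℕ) :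
    {g : Fin n → ℕ // CompatW w g} ≃ {l : Fin n → ℕ // Antitone l} where
  toFun g := ⟨fun i => g.1 i - csh w i, by
    apply antitone_of_adj
    intro i hi
    have h1 := compat_step g.2 i hi
    have h2 := csh_adj w i hi
    have h3 := csh_le_of_compat g.2 i
    have h4 := csh_le_of_compat g.2 ⟨(i : ℕ) + 1, hi⟩
    omega⟩
  invFun l := ⟨fun i => l.1 i + csh w i, by
    intro i hi
    dsimp only
    have h2 := csh_adj w i hi
    have h5 : l.1 ⟨(i : ℕ) + 1, hi⟩ ≤ l.1 i := l.2 (Fin.le_def.mpr (by simp))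
    constructor
    · omega
    · intro hd
      have : dstep w i = 1 := by unfold dstep; rw [dif_pos hi, if_pos hd]
      omega⟩
  left_inv g := Subtype.ext (funext fun i => by
    have := csh_le_of_compat g.2 i
    dsimp only
    omega)
  right_inv l := Subtype.ext (funext fun i => by dsimp only; omega)

lemma compatEquiv_apply {n : ℕ} (w : Fin n → ℕ) (g : {g : Fin n → ℕ // CompatW w g}) (i : Fin n) :
    g.1 i = ((compatEquiv w) g).1 i + csh w i := by
  have := csh_le_of_compat g.2 i
  simp only [compatEquiv, Equiv.coe_fn_mk]
  omega

lemma compatEquiv_sum {n : ℕ} (w : Fin n → ℕ) (g : {g : Fin n → ℕ // CompatW w g}) :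
    ∑ i, g.1 i = (∑ i, ((compatEquiv w) g).1 i) + majW w := by
  rw [Finset.sum_congr rfl (fun i _ => compatEquiv_apply w g i), Finset.sum_add_distrib, sum_csh]

lemma compatEquiv_last {n : ℕ} (w : Fin n → ℕ) (g : {g : Fin n → ℕ // CompatW w g})
    (h0 : 0 < n) : ((compatEquiv w) g).1 ⟨n - 1, by omega⟩ = g.1 ⟨n - 1, by omega⟩ := by
  rw [compatEquiv_apply w g ⟨n - 1, by omega⟩, csh_last w _ (by simp; omega)]
  omega

noncomputable def QFs (m : ℕ) : PowerSeries ℤ :=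
  ∏ i ∈ Finset.range m, (1 - (PowerSeries.X : PowerSeries ℤ) ^ (i + 1))

noncomputable def antEquiv (n : ℕ) : (Fin n → ℕ) ≃ {l : Fin n → ℕ // Antitone l} where
  toFun d := ⟨tailsum d, antitone_of_adj (fun i hi => by rw [tailsum_adj d i hi]; omega)⟩
  invFun l := fun i => l.1 i - (if h : (i : ℕ) + 1 < n then l.1 ⟨(i : ℕ) + 1, h⟩ else 0)
  left_inv d := funext fun i => by
    by_cases h : (i : ℕ) + 1 < n
    · simp only []
      rw [dif_pos h, tailsum_adj d i h]
      omega
    · simp only []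
      rw [dif_neg h, tailsum_last d i (by have := i.isLt; omega)]
      omega
  right_inv l := Subtype.ext (funext (by
    apply fin_rev_induction (fun i => tailsum (fun j => l.1 j -
      (if h : (j : ℕ) + 1 < n then l.1 ⟨(j : ℕ) + 1, h⟩ else 0)) i = l.1 i)
    · intro i hi
      rw [tailsum_last _ _ hi, dif_neg (by omega)]
      omega
    · intro i h ih
      rw [tailsum_adj _ _ h, ih]
      show l.1 i - (if h' : (i : ℕ) + 1 < n then l.1 ⟨(i : ℕ) + 1, h'⟩ else 0)
          + l.1 ⟨(i : ℕ) + 1, h⟩ = l.1 i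
      rw [dif_pos h]
      have h5 : l.1 ⟨(i : ℕ) + 1, h⟩ ≤ l.1 i := l.2 (Fin.le_def.mpr (by simp))
      omega))

lemma gfAnt_mul (n : ℕ) :
    gf {l : Fin n → ℕ // Antitone l} (fun l => ∑ i, l.1 i) * QFs n = 1 := by
  have h1 : gf (Fin n → ℕ) (fun d => ∑ j : Fin n, ((j : ℕ) + 1) * d j)
      = gf {l : Fin n → ℕ // Antitone l} (fun l => ∑ i, l.1 i) := by
    apply gf_congr (antEquiv n)
    intro d
    exact (sum_tailsum d)
  have h2 : QFs n = ∏ j : Fin n, (1 - (PowerSeries.X : PowerSeries ℤ) ^ ((j : ℕ) + 1)) := by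
    rw [QFs, ← Fin.prod_univ_eq_prod_range (fun j => 1 - (PowerSeries.X : PowerSeries ℤ) ^ (j + 1)) n]
  rw [← h1, h2]
  exact gf_pi n (fun j => (j : ℕ) + 1) (fun j => Nat.succ_pos _)

lemma gfAntMod_mul (m c : ℕ) :
    gf {l : Fin (m + 1) → ℕ // Antitone l}
        (fun l => (∑ i, l.1 i) + c * l.1 ⟨m, by omega⟩) *
      (QFs m * (1 - (PowerSeries.X : PowerSeries ℤ) ^ (m + 1 + c))) = 1 := by
  set a : Fin (m + 1) → ℕ := fun j => (j : ℕ) + 1 + (if (j : ℕ) = m then c else 0) with ha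
  have hcast : ∀ j : Fin m, a (Fin.castSucc j) = (j : ℕ) + 1 := by
    intro j
    rw [ha]
    have hcc : ((Fin.castSucc j : Fin (m + 1)) : ℕ) = (j : ℕ) := rfl
    dsimp only
    rw [hcc, if_neg (by have := j.isLt; omega : ¬ ((j : ℕ) = m))]
  have hlasta : a (Fin.last m) = m + 1 + c := by rw [ha]; simp [Fin.last]
  have hsum : ∀ d : Fin (m + 1) → ℕ, ∑ j, a j * d j
      = (∑ j : Fin (m + 1), ((j : ℕ) + 1) * d j) + c * d ⟨m, by omega⟩ := by
    intro d
    have : ∀ j : Fin (m + 1), a j * d j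
        = ((j : ℕ) + 1) * d j + (if j = (⟨m, by omega⟩ : Fin (m + 1)) then c * d j else 0) := by
      intro j
      rw [ha]
      by_cases h : (j : ℕ) = m
      · have : j = (⟨m, by omega⟩ : Fin (m + 1)) := Fin.ext (by simp [h])
        simp [h, this]
        ring
      · have : ¬ (j = (⟨m, by omega⟩ : Fin (m + 1))) := fun hc => h (by rw [hc])
        simp [h, this]
    rw [Finset.sum_congr rfl (fun j _ => this j), Finset.sum_add_distrib,
      Finset.sum_ite_eq' Finset.univ (⟨m, by omega⟩ : Fin (m + 1)) (fun j => c * d j)]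
    simp
  have h1 : gf (Fin (m + 1) → ℕ) (fun d => ∑ j, a j * d j)
      = gf {l : Fin (m + 1) → ℕ // Antitone l}
          (fun l => (∑ i, l.1 i) + c * l.1 ⟨m, by omega⟩) := by
    apply gf_congr (antEquiv (m + 1))
    intro d
    have hlast : ((antEquiv (m + 1)) d).1 ⟨m, by omega⟩ = d ⟨m, by omega⟩ := by
      show tailsum d ⟨m, _⟩ = d ⟨m, by omega⟩
      rw [tailsum_last _ _ (by simp)]
    show (∑ i, ((antEquiv (m + 1)) d).1 i) + c * ((antEquiv (m + 1)) d).1 ⟨m, by omega⟩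
        = ∑ j, a j * d j
    rw [hlast, hsum d]
    congr 1
    exact sum_tailsum d
  have h2 : ∏ j : Fin (m + 1), (1 - (PowerSeries.X : PowerSeries ℤ) ^ (a j))
      = QFs m * (1 - (PowerSeries.X : PowerSeries ℤ) ^ (m + 1 + c)) := by
    rw [Fin.prod_univ_castSucc]
    have e1 : ∏ j : Fin m, (1 - (PowerSeries.X : PowerSeries ℤ) ^ (a (Fin.castSucc j))) = QFs m := by
      rw [QFs, ← Fin.prod_univ_eq_prod_range
        (fun j => 1 - (PowerSeries.X : PowerSeries ℤ) ^ (j + 1)) m]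
      exact Finset.prod_congr rfl (fun j _ => by rw [hcast j])
    rw [e1, hlasta]
  have h3 := gf_pi (m + 1) a (fun j => by
    show 0 < (j : ℕ) + 1 + (if (j : ℕ) = m then c else 0)
    omega)
  rw [h2] at h3
  rw [← h1]
  exact h3

lemma gfCompat (n : ℕ) (w : Fin n → ℕ) :
    gf {g : Fin n → ℕ // CompatW w g} (fun g => ∑ i, g.1 i)
      = (PowerSeries.X : PowerSeries ℤ) ^ majW w *
        gf {l : Fin n → ℕ // Antitone l} (fun l => ∑ i, l.1 i) := by
  rw [← gf_shift]
  exact gf_congr (compatEquiv w) (fun g => (compatEquiv_sum w g).symm)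

lemma gfCompatMod (m c : ℕ) (w : Fin (m + 1) → ℕ) :
    gf {g : Fin (m + 1) → ℕ // CompatW w g}
        (fun g => (∑ i, g.1 i) + c * g.1 ⟨m, by omega⟩)
      = (PowerSeries.X : PowerSeries ℤ) ^ majW w *
        gf {l : Fin (m + 1) → ℕ // Antitone l}
          (fun l => (∑ i, l.1 i) + c * l.1 ⟨m, by omega⟩) := by
  rw [← gf_shift]
  apply gf_congr (compatEquiv w)
  intro g
  show ((∑ i, ((compatEquiv w) g).1 i) + c * ((compatEquiv w) g).1 ⟨m, by omega⟩) + majW w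
      = (∑ i, g.1 i) + c * g.1 ⟨m, by omega⟩
  have hl := compatEquiv_last w g (by omega : 0 < m + 1)
  have hm : (⟨m + 1 - 1, by omega⟩ : Fin (m + 1)) = (⟨m, by omega⟩ : Fin (m + 1)) := rfl
  rw [hm] at hl
  rw [hl, compatEquiv_sum w g]
  ring


lemma compat_antitone {n : ℕ} {v g : Fin n → ℕ} (hg : CompatW v g) : Antitone g :=
  antitone_of_adj (fun i hi => (hg i hi).1)

lemma mem_linExts {R : Type} [Fintype R] [PartialOrder R] {w : R ≃ Fin (Fintype.card R)} :
    w ∈ linExts R (Fintype.card R) ↔ ∀ x y : R, x ≤ y → w x ≤ w y := by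
  rw [linExts, Finset.mem_filter]
  simp

lemma compat_word_adj {n : ℕ} {v g : Fin n → ℕ} (hv : Function.Injective v)
    (hg : CompatW v g) (i j : Fin n) (hj : (j : ℕ) = (i : ℕ) + 1) (hgij : g i ≤ g j) :
    v i < v j := by
  have hij : (i : ℕ) + 1 < n := by have := j.isLt; omega
  have hj' : j = ⟨(i : ℕ) + 1, hij⟩ := Fin.ext (by simp [hj])
  subst hj'
  have h2 := hg i hij
  have hne : v ⟨(i : ℕ) + 1, hij⟩ ≠ v i := fun h => by
    have : (⟨(i : ℕ) + 1, hij⟩ : Fin n) = i := hv h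
    have := congrArg Fin.val this
    simp at this
  rcases lt_trichotomy (v ⟨(i : ℕ) + 1, hij⟩) (v i) with h | h | h
  · have := h2.2 h; omega
  · exact absurd h hne
  · exact h

lemma compat_word_lt {n : ℕ} {v g : Fin n → ℕ} (hv : Function.Injective v)
    (hg : CompatW v g) : ∀ (k : ℕ) (i j : Fin n), (j : ℕ) = (i : ℕ) + k + 1 →
      g i ≤ g j → v i < v j := by
  intro k
  induction k with
  | zero =>
    intro i j hj hgij
    exact compat_word_adj hv hg i j (by omega) hgij
  | succ k ih =>
    intro i j hj hgij
    have hj' : (i : ℕ) + k + 1 < n := by have := j.isLt; omega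
    set j' : Fin n := ⟨(i : ℕ) + k + 1, hj'⟩ with hjj
    have hanti := compat_antitone hg
    have h1 : g j' ≤ g i := hanti (Fin.le_def.mpr (by rw [hjj]; simp; omega))
    have h2 : g j ≤ g j' := hanti (Fin.le_def.mpr (by rw [hjj]; simp; omega))
    have hstep : v j' < v j := compat_word_adj hv hg j' j (by rw [hjj]; simp; omega) (by omega)
    exact lt_trans (ih i j' (by rw [hjj]) (by omega)) hstep

lemma compat_word_lt' {n : ℕ} {v g : Fin n → ℕ} (hv : Function.Injective v)
    (hg : CompatW v g) (i j : Fin n) (hij : i < j) (hgij : g i ≤ g j) : v i < v j := by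
  have := Fin.lt_def.mp hij
  exact compat_word_lt hv hg ((j : ℕ) - (i : ℕ) - 1) i j (by omega) hgij

def keyLT {R : Type} (ω : R → ℕ) (f : R → ℕ) (r t : R) : Prop :=
  f t < f r ∨ (f t = f r ∧ ω r < ω t)

lemma keyLT_trichotomy {R : Type} {ω : R → ℕ} (hω : Function.Injective ω)
    (f : R → ℕ) {r t : R} (hne : r ≠ t) : keyLT ω f r t ∨ keyLT ω f t r := by
  unfold keyLT
  rcases lt_trichotomy (f t) (f r) with h | h | h
  · exact Or.inl (Or.inl h)
  · have : ω r ≠ ω t := fun hh => hne (hω hh)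
    rcases lt_or_gt_of_ne this with h2 | h2
    · exact Or.inl (Or.inr ⟨h, h2⟩)
    · exact Or.inr (Or.inr ⟨h.symm, h2⟩)
  · exact Or.inr (Or.inl h)

lemma perm_unique {R : Type} [Fintype R] {ω : R → ℕ} (hω : Function.Injective ω)
    (f : R → ℕ) (e e' : R ≃ Fin (Fintype.card R))
    (he : ∀ r t, keyLT ω f r t → e r < e t)
    (he' : ∀ r t, keyLT ω f r t → e' r < e' t) : e = e' := by
  have hsm : StrictMono (fun i => e (e'.symm i)) := by
    intro i j hij
    have hne : e'.symm i ≠ e'.symm j := fun h => by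
      have := congrArg e' h
      simp at this
      exact absurd (this ▸ hij) (lt_irrefl _)
    rcases keyLT_trichotomy hω f hne with h | h
    · exact he _ _ h
    · have := he' _ _ h
      simp at this
      exact absurd (lt_trans hij this) (lt_irrefl _)
  have hoi : ∀ i, (e (e'.symm i)) = i := by
    intro i
    let oi : Fin (Fintype.card R) ≃o Fin (Fintype.card R) :=
      { toEquiv := e'.symm.trans e, map_rel_iff' := by
          intro a b
          exact hsm.le_iff_le }
    have := Fin.coe_orderIso_apply oi i
    exact Fin.ext this
  apply Equiv.ext
  intro r
  have := hoi (e' r)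
  simpa using this

lemma exists_sortPerm {R : Type} [Fintype R] {ω : R → ℕ} (hω : Function.Injective ω)
    (f : R → ℕ) : ∃ e : R ≃ Fin (Fintype.card R),
      ∀ r t : R, keyLT ω f r t ↔ e r < e t := by
  classical
  let key : R → ℕᵒᵈ ×ₗ ℕ := fun r => toLex (OrderDual.toDual (f r), ω r)
  have hkeyinj : Function.Injective key := by
    intro r t h
    apply hω
    have := congrArg (fun x => (ofLex x).2) h
    simpa [key] using this
  have hlt : ∀ r t : R, key r < key t ↔ keyLT ω f r t := by
    intro r t
    show toLex (OrderDual.toDual (f r), ω r) < toLex (OrderDual.toDual (f t), ω t) ↔ _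
    rw [Prod.Lex.lt_iff]
    unfold keyLT
    constructor
    · rintro (h | ⟨h1, h2⟩)
      · exact Or.inl (by simpa using h)
      · exact Or.inr ⟨by simpa using h1.symm, by simpa using h2⟩
    · rintro (h | ⟨h1, h2⟩)
      · exact Or.inl (by simpa using h)
      · exact Or.inr ⟨by simpa using h1.symm, by simpa using h2⟩
  let img : Finset (ℕᵒᵈ ×ₗ ℕ) := Finset.univ.image key
  have hcard : img.card = Fintype.card R := by
    rw [Finset.card_image_of_injective _ hkeyinj, Finset.card_univ]
  let oiso := img.orderIsoOfFin hcard
  have hmem : ∀ r, key r ∈ img := fun r => Finset.mem_image_of_mem key (Finset.mem_univ r)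
  let eR : R ≃ {x // x ∈ img} := Equiv.ofBijective (fun r => ⟨key r, hmem r⟩) (by
    constructor
    · intro r t h
      exact hkeyinj (congrArg Subtype.val h)
    · rintro ⟨x, hx⟩
      obtain ⟨r, _, rfl⟩ := Finset.mem_image.mp hx
      exact ⟨r, rfl⟩)
  refine ⟨eR.trans oiso.toEquiv.symm, ?_⟩
  intro r t
  rw [← hlt]
  show key r < key t ↔ oiso.toEquiv.symm (eR r) < oiso.toEquiv.symm (eR t)
  have : ∀ x y : {x // x ∈ img}, oiso.toEquiv.symm x < oiso.toEquiv.symm y ↔ x < y := by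
    intro x y
    exact (OrderIso.lt_iff_lt oiso.symm)
  rw [this]
  rfl


lemma word_injective {R : Type} [Fintype R] {ω : R → ℕ} (hω : Function.Injective ω)
    (w : R ≃ Fin (Fintype.card R)) : Function.Injective (word ω w) := by
  intro i j h
  have := hω h
  exact w.symm.injective this

lemma word_apply {R : Type} [Fintype R] {ω : R → ℕ} (w : R ≃ Fin (Fintype.card R)) (x : R) :
    word ω w (w x) = ω x := by simp [word]

section FundCore
variable {R : Type} [Fintype R] [PartialOrder R] {ω : R → ℕ}

lemma psi_isPPart (hω : Function.Injective ω) {w : R ≃ Fin (Fintype.card R)}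
    (hw : ∀ x y : R, x ≤ y → w x ≤ w y) {g : Fin (Fintype.card R) → ℕ}
    (hg : CompatW (word ω w) g) : IsPPart ω (fun r => g (w r)) := by
  intro x y hxy
  constructor
  · exact compat_antitone hg (hw x y hxy)
  · intro hlt
    by_contra hcon
    push_neg at hcon
    have hne : x ≠ y := fun h => by subst h; exact lt_irrefl _ hlt
    have hwlt : w x < w y := lt_of_le_of_ne (hw x y hxy) (fun h => hne (w.injective h))
    have := compat_word_lt' (word_injective hω w) hg (w x) (w y) hwlt hcon
    rw [word_apply, word_apply] at this
    omega

lemma psi_isPPartS (hω : Function.Injective ω) {s : R} {w : R ≃ Fin (Fintype.card R)}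
    (hw : ∀ x y : R, x ≤ y → w x ≤ w y) (hend : ∀ x : R, w x ≤ w s)
    {g : Fin (Fintype.card R) → ℕ} (hg : CompatW (word ω w) g) :
    IsPPartS ω s (fun r => g (w r)) := by
  refine ⟨psi_isPPart hω hw hg, ?_, ?_⟩
  · intro t
    exact compat_antitone hg (hend t)
  · intro t hts heq
    have hwlt : w t < w s := lt_of_le_of_ne (hend t) (fun h => hts (w.injective h))
    have := compat_word_lt' (word_injective hω w) hg (w t) (w s) hwlt (le_of_eq heq.symm)
    rw [word_apply, word_apply] at this
    exact this

lemma psi_keymono (hω : Function.Injective ω) {w : R ≃ Fin (Fintype.card R)}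
    {g : Fin (Fintype.card R) → ℕ} (hg : CompatW (word ω w) g) :
    ∀ r t, keyLT ω (fun r => g (w r)) r t → w r < w t := by
  intro r t hk
  rcases hk with h | ⟨h1, h2⟩
  · by_contra hcon
    push_neg at hcon
    have := compat_antitone hg hcon
    simp only at h this
    omega
  · by_contra hcon
    push_neg at hcon
    have hne : r ≠ t := fun h => (lt_irrefl _ (h ▸ h2))
    have hlt : w t < w r := lt_of_le_of_ne hcon (fun h => hne (w.injective h).symm)
    simp only at h1
    have := compat_word_lt' (word_injective hω w) hg (w t) (w r) hlt (le_of_eq h1)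
    rw [word_apply, word_apply] at this
    omega

lemma exists_decomp (hω : Function.Injective ω) {f : R → ℕ} (hf : IsPPart ω f) :
    ∃ (w : R ≃ Fin (Fintype.card R)) (g : Fin (Fintype.card R) → ℕ),
      (∀ x y : R, x ≤ y → w x ≤ w y) ∧ CompatW (word ω w) g ∧ (∀ r, f r = g (w r)) ∧
      (∀ r t, keyLT ω f r t → w r < w t) := by
  obtain ⟨e, he⟩ := exists_sortPerm hω f
  refine ⟨e, fun i => f (e.symm i), ?_, ?_, fun r => by simp, fun r t h => (he r t).mp h⟩
  · intro x y hxy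
    by_contra hcon
    push_neg at hcon
    have hk : keyLT ω f y x := (he y x).mpr hcon
    rcases hk with h | ⟨h1, h2⟩
    · exact absurd (hf x y hxy).1 (by omega)
    · exact absurd ((hf x y hxy).2 h2) (by omega)
  · intro i hi
    set r := e.symm i with hr
    set t := e.symm ⟨(i : ℕ) + 1, hi⟩ with ht
    have hrt : e r < e t := by
      rw [hr, ht]
      simp [Fin.lt_def]
    have hk : keyLT ω f r t := (he r t).mpr hrt
    have hwr : word ω e i = ω r := by rw [word, hr]
    have hwt : word ω e ⟨(i : ℕ) + 1, hi⟩ = ω t := by rw [word, ht]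
    constructor
    · show f t ≤ f r
      rcases hk with h | ⟨h1, _⟩
      · omega
      · omega
    · rw [hwr, hwt]
      intro hlt
      show f t < f r
      rcases hk with h | ⟨h1, h2⟩
      · exact h
      · omega

noncomputable def fundEquivG (hω : Function.Injective ω) :
    (Σ w : {w : R ≃ Fin (Fintype.card R) // w ∈ linExts R (Fintype.card R)},
      {g : Fin (Fintype.card R) → ℕ // CompatW (word ω w.1) g})
    ≃ {f : R → ℕ // IsPPart ω f} :=
  Equiv.ofBijective
    (fun x => ⟨fun r => x.2.1 (x.1.1 r), psi_isPPart hω (mem_linExts.mp x.1.2) x.2.2⟩)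
    (by
      constructor
      · rintro ⟨⟨w, hwmem⟩, ⟨g, hgc⟩⟩ ⟨⟨w', hwmem'⟩, ⟨g', hgc'⟩⟩ h
        have hf : (fun r => g (w r)) = (fun r => g' (w' r)) := congrArg Subtype.val h
        have hww : w = w' := by
          apply perm_unique hω (fun r => g (w r)) w w' (psi_keymono hω hgc)
          rw [hf]
          exact psi_keymono hω hgc'
        obtain rfl := hww
        have hgg : g = g' := by
          funext i
          have := congrFun hf (w.symm i)
          simpa using this
        obtain rfl := hgg
        rfl
      · rintro ⟨f, hf⟩
        obtain ⟨w, g, hw, hg, hfg, _⟩ := exists_decomp hω hf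
        exact ⟨⟨⟨w, mem_linExts.mpr hw⟩, ⟨g, hg⟩⟩, Subtype.ext (funext (fun r => (hfg r).symm))⟩)

lemma fundEquivG_apply (hω : Function.Injective ω)
    (x : Σ w : {w : R ≃ Fin (Fintype.card R) // w ∈ linExts R (Fintype.card R)},
      {g : Fin (Fintype.card R) → ℕ // CompatW (word ω w.1) g}) :
    ((fundEquivG hω) x).1 = fun r => x.2.1 (x.1.1 r) := rfl

noncomputable def fundEquivS (hω : Function.Injective ω) (s : R) :
    (Σ w : {w : R ≃ Fin (Fintype.card R) //
        w ∈ (linExts R (Fintype.card R)).filter (fun w => ∀ x, w x ≤ w s)},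
      {g : Fin (Fintype.card R) → ℕ // CompatW (word ω w.1) g})
    ≃ {f : R → ℕ // IsPPartS ω s f} :=
  Equiv.ofBijective
    (fun x => ⟨fun r => x.2.1 (x.1.1 r),
      psi_isPPartS hω (mem_linExts.mp (Finset.mem_filter.mp x.1.2).1)
        (by
          have := (Finset.mem_filter.mp x.1.2).2
          exact this) x.2.2⟩)
    (by
      constructor
      · rintro ⟨⟨w, hwmem⟩, ⟨g, hgc⟩⟩ ⟨⟨w', hwmem'⟩, ⟨g', hgc'⟩⟩ h
        have hf : (fun r => g (w r)) = (fun r => g' (w' r)) := congrArg Subtype.val h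
        have hww : w = w' := by
          apply perm_unique hω (fun r => g (w r)) w w' (psi_keymono hω hgc)
          rw [hf]
          exact psi_keymono hω hgc'
        obtain rfl := hww
        have hgg : g = g' := by
          funext i
          have := congrFun hf (w.symm i)
          simpa using this
        obtain rfl := hgg
        rfl
      · rintro ⟨f, hf⟩
        obtain ⟨w, g, hw, hg, hfg, hkey⟩ := exists_decomp hω hf.1
        have hend : ∀ x : R, w x ≤ w s := by
          intro x
          rcases eq_or_ne x s with rfl | hne
          · exact le_refl _
          · apply le_of_lt
            apply hkey
            rcases lt_or_eq_of_le (hf.2.1 x) with h | h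
            · exact Or.inl h
            · exact Or.inr ⟨h, hf.2.2 x hne h⟩
        refine ⟨⟨⟨w, Finset.mem_filter.mpr ⟨mem_linExts.mpr hw, hend⟩⟩, ⟨g, hg⟩⟩,
          Subtype.ext (funext (fun r => (hfg r).symm))⟩)

set_option maxHeartbeats 1000000 in
lemma fundEquivS_apply (hω : Function.Injective ω) (s : R)
    (x : Σ w : {w : R ≃ Fin (Fintype.card R) //
        w ∈ (linExts R (Fintype.card R)).filter (fun w => ∀ x, w x ≤ w s)},
      {g : Fin (Fintype.card R) → ℕ // CompatW (word ω w.1) g}) :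
    ((fundEquivS hω s) x).1 = fun r => x.2.1 (x.1.1 r) := rfl

end FundCore

lemma gf_sigma {ι : Type*} (E : Finset ι) (T : ι → Type*) (wt : ∀ i, T i → ℕ)
    (hT : ∀ i m, Finite {t : T i // wt i t = m}) :
    gf (Σ w : {i // i ∈ E}, T w.1) (fun x => wt x.1.1 x.2) = ∑ i ∈ E, gf (T i) (wt i) := by
  ext m
  rw [map_sum]
  simp only [gf, PowerSeries.coeff_mk]
  rw [← Nat.cast_sum]
  congr 1
  have e : {x : Σ w : {i // i ∈ E}, T w.1 // wt x.1.1 x.2 = m}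
      ≃ Σ w : {i // i ∈ E}, {t : T w.1 // wt w.1 t = m} :=
    ⟨fun x => ⟨x.1.1, ⟨x.1.2, x.2⟩⟩, fun y => ⟨⟨y.1, y.2.1⟩, y.2.2⟩, fun x => rfl, fun y => rfl⟩
  rw [Nat.card_congr e]
  haveI : ∀ w : {i // i ∈ E}, Finite {t : T w.1 // wt w.1 t = m} := fun w => hT w.1 m
  exact nat_card_sigma_finset E (fun i => {t : T i // wt i t = m})


lemma finite_sub_slice {α : Type} [Fintype α] (Pr : (α → ℕ) → Prop)
    (wt : {g : α → ℕ // Pr g} → ℕ) (hwt : ∀ a t, a.1 t ≤ wt a) (m : ℕ) :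
    Finite {a : {g : α → ℕ // Pr g} // wt a = m} :=
  finite_slice (fun a => a.1) Subtype.coe_injective wt hwt m

lemma single_le_sum' {α : Type} [Fintype α] (f : α → ℕ) (t : α) : f t ≤ ∑ i, f i :=
  Finset.single_le_sum (f := f) (fun i _ => Nat.zero_le _) (Finset.mem_univ t)

lemma ends_last {R : Type} [Fintype R] {w : R ≃ Fin (Fintype.card R)} {s : R}
    (hend : ∀ x, w x ≤ w s) (h0 : 0 < Fintype.card R) :
    w s = ⟨Fintype.card R - 1, by omega⟩ := by
  apply Fin.ext
  show ((w s : Fin (Fintype.card R)) : ℕ) = Fintype.card R - 1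
  have h1 := hend (w.symm ⟨Fintype.card R - 1, by omega⟩)
  rw [Equiv.apply_symm_apply] at h1
  have h2 := Fin.le_def.mp h1
  have h3 := (w s).isLt
  simp at h2
  omega

lemma gf_ppart {R : Type} [Fintype R] [PartialOrder R] {ω : R → ℕ}
    (hω : Function.Injective ω) :
    gf {f : R → ℕ // IsPPart ω f} (fun f => ∑ t, f.1 t)
      = ∑ w ∈ linExts R (Fintype.card R),
          gf {g : Fin (Fintype.card R) → ℕ // CompatW (word ω w) g} (fun g => ∑ i, g.1 i) := by
  rw [← gf_sigma (linExts R (Fintype.card R))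
    (fun w => {g : Fin (Fintype.card R) → ℕ // CompatW (word ω w) g})
    (fun w g => ∑ i, g.1 i)
    (fun w m => finite_sub_slice _ _ (fun a t => single_le_sum' a.1 t) m)]
  symm
  apply gf_congr (fundEquivG hω)
  intro x
  show ∑ t, ((fundEquivG hω) x).1 t = ∑ i, x.2.1 i
  rw [fundEquivG_apply]
  exact Equiv.sum_comp x.1.1 x.2.1

lemma gf_ppartS {R : Type} [Fintype R] [PartialOrder R] {ω : R → ℕ}
    (hω : Function.Injective ω) (s : R) (c : ℕ) (h0 : 0 < Fintype.card R) :
    gf {f : R → ℕ // IsPPartS ω s f} (fun f => (∑ t, f.1 t) + c * f.1 s)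
      = ∑ w ∈ (linExts R (Fintype.card R)).filter (fun w => ∀ x, w x ≤ w s),
          gf {g : Fin (Fintype.card R) → ℕ // CompatW (word ω w) g}
            (fun g => (∑ i, g.1 i) + c * g.1 ⟨Fintype.card R - 1, by omega⟩) := by
  rw [← gf_sigma ((linExts R (Fintype.card R)).filter (fun w => ∀ x, w x ≤ w s))
    (fun w => {g : Fin (Fintype.card R) → ℕ // CompatW (word ω w) g})
    (fun w g => (∑ i, g.1 i) + c * g.1 ⟨Fintype.card R - 1, by omega⟩)
    (fun w m => finite_sub_slice _ _
      (fun a t => le_trans (single_le_sum' a.1 t) (Nat.le_add_right _ _)) m)]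
  symm
  apply gf_congr (fundEquivS hω s)
  intro x
  show (∑ t, ((fundEquivS hω s) x).1 t) + c * ((fundEquivS hω s) x).1 s
      = (∑ i, x.2.1 i) + c * x.2.1 ⟨Fintype.card R - 1, by omega⟩
  rw [fundEquivS_apply]
  have h1 : ∑ t, x.2.1 (x.1.1 t) = ∑ i, x.2.1 i := Equiv.sum_comp x.1.1 x.2.1
  have h2 : x.1.1 s = ⟨Fintype.card R - 1, by omega⟩ :=
    ends_last (Finset.mem_filter.mp x.1.2).2 h0
  dsimp only
  rw [h1, h2]

lemma gfAntMod_mul' (n c : ℕ) (h0 : 0 < n) :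
    gf {l : Fin n → ℕ // Antitone l} (fun l => (∑ i, l.1 i) + c * l.1 ⟨n - 1, by omega⟩) *
      (QFs (n - 1) * (1 - (PowerSeries.X : PowerSeries ℤ) ^ (n + c))) = 1 := by
  obtain ⟨m, rfl⟩ : ∃ m, n = m + 1 := ⟨n - 1, by omega⟩
  exact gfAntMod_mul m c

lemma gfCompatMod' (n c : ℕ) (h0 : 0 < n) (w : Fin n → ℕ) :
    gf {g : Fin n → ℕ // CompatW w g}
        (fun g => (∑ i, g.1 i) + c * g.1 ⟨n - 1, by omega⟩)
      = (PowerSeries.X : PowerSeries ℤ) ^ majW w *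
        gf {l : Fin n → ℕ // Antitone l}
          (fun l => (∑ i, l.1 i) + c * l.1 ⟨n - 1, by omega⟩) := by
  obtain ⟨m, rfl⟩ : ∃ m, n = m + 1 := ⟨n - 1, by omega⟩
  exact gfCompatMod m c w


section Split
variable {P Q : Type} [Fintype P] [Fintype Q] [PartialOrder P] [PartialOrder Q]
  (ω : P ⊕ Q → ℕ) (s : P)

noncomputable def splitEquiv (hs : ∀ t : Q, ω (Sum.inr t) < ω (Sum.inl s)) :
    {f : P ⊕ Q → ℕ // IsPPartS ω (Sum.inl s) f}
    ≃ ({g : P → ℕ // IsPPartS (ω ∘ Sum.inl) s g} ×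
        {h : Q → ℕ // IsPPart (ω ∘ Sum.inr) h}) where
  toFun f := (⟨fun x => f.1 (Sum.inl x), by
      obtain ⟨hpp, hmin, hstrict⟩ := f.2
      refine ⟨?_, fun t => hmin (Sum.inl t),
        fun t hts heq => hstrict (Sum.inl t) (fun h => hts (Sum.inl.inj h)) heq⟩
      intro x y hxy
      exact hpp (Sum.inl x) (Sum.inl y) (Sum.inl_le_inl_iff.mpr hxy)⟩,
    ⟨fun y => f.1 (Sum.inr y) - f.1 (Sum.inl s), by
      obtain ⟨hpp, hmin, hstrict⟩ := f.2
      intro a b hab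
      have h1 := hpp (Sum.inr a) (Sum.inr b) (Sum.inr_le_inr_iff.mpr hab)
      have h2 := hmin (Sum.inr a)
      have h3 := hmin (Sum.inr b)
      dsimp only
      constructor
      · omega
      · intro hlt
        have := h1.2 hlt
        omega⟩)
  invFun gh := ⟨Sum.elim gh.1.1 (fun y => gh.2.1 y + gh.1.1 s), by
      obtain ⟨⟨g, hg⟩, ⟨h, hh⟩⟩ := gh
      obtain ⟨hgp, hgmin, hgstrict⟩ := hg
      refine ⟨?_, ?_, ?_⟩
      · rintro (x | a) (y | b) hxy
        · exact hgp x y (Sum.inl_le_inl_iff.mp hxy)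
        · exact absurd hxy Sum.not_inl_le_inr
        · exact absurd hxy Sum.not_inr_le_inl
        · have h4 := hh a b (Sum.inr_le_inr_iff.mp hxy)
          constructor
          · simp only [Sum.elim_inr]; omega
          · intro hlt
            have := h4.2 hlt
            simp only [Sum.elim_inr]
            omega
      · rintro (x | b)
        · exact hgmin x
        · simp only [Sum.elim_inl, Sum.elim_inr]; omega
      · rintro (x | b) hne heq
        · exact hgstrict x (fun h => hne (congrArg Sum.inl h)) heq
        · exact hs b⟩
  left_inv f := Subtype.ext (funext (by
      rintro (x | b)
      · rfl
      · have := f.2.2.1 (Sum.inr b)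
        simp only [Sum.elim_inr]
        omega))
  right_inv gh := by
    apply Prod.ext
    · apply Subtype.ext; funext x; rfl
    · apply Subtype.ext; funext y
      simp only [Sum.elim_inr, Sum.elim_inl]
      omega

lemma gf_split (hs : ∀ t : Q, ω (Sum.inr t) < ω (Sum.inl s)) :
    gf {f : P ⊕ Q → ℕ // IsPPartS ω (Sum.inl s) f} (fun f => ∑ t, f.1 t)
      = gf {g : P → ℕ // IsPPartS (ω ∘ Sum.inl) s g}
          (fun g => (∑ t, g.1 t) + Fintype.card Q * g.1 s) *
        gf {h : Q → ℕ // IsPPart (ω ∘ Sum.inr) h} (fun h => ∑ t, h.1 t) := by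
  rw [← gf_mul _ _
    (fun m => finite_sub_slice _ _
      (fun a t => le_trans (single_le_sum' a.1 t) (Nat.le_add_right _ _)) m)
    (fun m => finite_sub_slice _ _ (fun a t => single_le_sum' a.1 t) m)]
  symm
  apply gf_congr (splitEquiv ω s hs).symm
  intro f
  show ∑ t, (((splitEquiv ω s hs).symm f).1) t
      = ((∑ t, f.1.1 t) + Fintype.card Q * f.1.1 s) + (∑ t, f.2.1 t)
  obtain ⟨⟨g, hg⟩, ⟨h, hh⟩⟩ := f
  show ∑ t : P ⊕ Q, (Sum.elim g (fun y => h y + g s)) t = _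
  rw [Fintype.sum_sum_type]
  simp only [Sum.elim_inl, Sum.elim_inr]
  rw [Finset.sum_add_distrib, Finset.sum_const, Finset.card_univ, smul_eq_mul]
  ring

end Split

noncomputable def PhiP : Polynomial ℤ →+* PowerSeries ℤ := Polynomial.coeToPowerSeries.ringHom

lemma PhiP_inj : Function.Injective PhiP := by
  intro a b h
  have : (a : PowerSeries ℤ) = (b : PowerSeries ℤ) := by
    simpa [PhiP, Polynomial.coeToPowerSeries.ringHom_apply] using h
  exact Polynomial.coe_inj.mp this

lemma PhiP_X_pow (k : ℕ) : PhiP (Polynomial.X ^ k) = (PowerSeries.X : PowerSeries ℤ) ^ k := by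
  rw [map_pow]
  congr 1
  rw [PhiP, Polynomial.coeToPowerSeries.ringHom_apply, Polynomial.coe_X]

lemma PhiP_qfac : ∀ m, PhiP (qfacP m) = QFs m
  | 0 => by
      show PhiP 1 = ∏ i ∈ Finset.range 0, (1 - (PowerSeries.X : PowerSeries ℤ) ^ (i + 1))
      rw [map_one, Finset.prod_range_zero]
  | m + 1 => by
      show PhiP (qfacP m * (1 - Polynomial.X ^ (m + 1))) = QFs (m + 1)
      rw [map_mul, PhiP_qfac m, map_sub, map_one, PhiP_X_pow]
      show QFs m * (1 - PowerSeries.X ^ (m + 1)) = QFs (m + 1)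
      rw [QFs, QFs, Finset.prod_range_succ]

/-- For a labeled disjoint union `P + Q` with `s ∈ P` whose label exceeds every
label of `Q`, the major-index `q`-analogue of linear extensions ending with
`ω(s)` factors as `[n-1 choose p-1]_q · e_q^{maj}(P;s) · e_q^{maj}(Q)`. -/
theorem eMajEnd_sum_poset (P Q : Type) [Fintype P] [Fintype Q] [PartialOrder P]
    [PartialOrder Q] (ω : P ⊕ Q → ℕ) (hinj : Function.Injective ω) (s : P)
    (hs : ∀ t : Q, ω (Sum.inr t) < ω (Sum.inl s)) :
    eMajEndIn (P ⊕ Q) ω {Sum.inl s} =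
      qBinom (Fintype.card (P ⊕ Q) - 1) (Fintype.card P - 1) *
        (eMajEndIn P (ω ∘ Sum.inl) {s} * eMaj Q (ω ∘ Sum.inr)) := by
  classical
  have hP : Function.Injective (ω ∘ Sum.inl) := hinj.comp Sum.inl_injective
  have hQ : Function.Injective (ω ∘ Sum.inr) := hinj.comp Sum.inr_injective
  have hp0 : 0 < Fintype.card P := Fintype.card_pos_iff.mpr ⟨s⟩
  have hcard : Fintype.card (P ⊕ Q) = Fintype.card P + Fintype.card Q := Fintype.card_sum
  have hn0 : 0 < Fintype.card (P ⊕ Q) := by omega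
  set DN := gf {l : Fin (Fintype.card (P ⊕ Q)) → ℕ // Antitone l} (fun l => ∑ i, l.1 i) with hDN
  set DQ := gf {l : Fin (Fintype.card Q) → ℕ // Antitone l} (fun l => ∑ i, l.1 i) with hDQ
  set DM := gf {l : Fin (Fintype.card P) → ℕ // Antitone l}
    (fun l => (∑ i, l.1 i) + Fintype.card Q * l.1 ⟨Fintype.card P - 1, by omega⟩) with hDM
  -- (1) big poset
  have hbig : gf {f : P ⊕ Q → ℕ // IsPPartS ω (Sum.inl s) f} (fun f => ∑ t, f.1 t)
      = PhiP (eMajEndIn (P ⊕ Q) ω {Sum.inl s}) * DN := by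
    have e0 : gf {f : P ⊕ Q → ℕ // IsPPartS ω (Sum.inl s) f} (fun f => ∑ t, f.1 t)
        = gf {f : P ⊕ Q → ℕ // IsPPartS ω (Sum.inl s) f}
            (fun f => (∑ t, f.1 t) + 0 * f.1 (Sum.inl s)) :=
      gf_congr (Equiv.refl _) (fun a => by simp)
    rw [e0, gf_ppartS hinj (Sum.inl s) 0 hn0]
    have e1 : ∀ w ∈ (linExts (P ⊕ Q) (Fintype.card (P ⊕ Q))).filter
        (fun w => ∀ x, w x ≤ w (Sum.inl s)),
        gf {g : Fin (Fintype.card (P ⊕ Q)) → ℕ // CompatW (word ω w) g}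
          (fun g => (∑ i, g.1 i) + 0 * g.1 ⟨Fintype.card (P ⊕ Q) - 1, by omega⟩)
        = PowerSeries.X ^ majW (word ω w) * DN := by
      intro w _
      rw [← gfCompat (Fintype.card (P ⊕ Q)) (word ω w)]
      exact gf_congr (Equiv.refl _) (fun a => by simp)
    rw [Finset.sum_congr rfl e1, ← Finset.sum_mul]
    congr 1
    rw [eMajEndIn, map_sum]
    simp only [Set.mem_singleton_iff, exists_eq_left]
    exact (Finset.sum_congr rfl (fun w _ => PhiP_X_pow _)).symm
  -- (2) P side
  have hPside : gf {g : P → ℕ // IsPPartS (ω ∘ Sum.inl) s g}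
      (fun g => (∑ t, g.1 t) + Fintype.card Q * g.1 s)
      = PhiP (eMajEndIn P (ω ∘ Sum.inl) {s}) * DM := by
    rw [gf_ppartS hP s (Fintype.card Q) hp0]
    have e1 : ∀ w ∈ (linExts P (Fintype.card P)).filter (fun w => ∀ x, w x ≤ w s),
        gf {g : Fin (Fintype.card P) → ℕ // CompatW (word (ω ∘ Sum.inl) w) g}
          (fun g => (∑ i, g.1 i) + Fintype.card Q * g.1 ⟨Fintype.card P - 1, by omega⟩)
        = PowerSeries.X ^ majW (word (ω ∘ Sum.inl) w) * DM := by
      intro w _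
      exact gfCompatMod' (Fintype.card P) (Fintype.card Q) hp0 (word (ω ∘ Sum.inl) w)
    rw [Finset.sum_congr rfl e1, ← Finset.sum_mul]
    congr 1
    rw [eMajEndIn, map_sum]
    simp only [Set.mem_singleton_iff, exists_eq_left]
    exact (Finset.sum_congr rfl (fun w _ => PhiP_X_pow _)).symm
  -- (3) Q side
  have hQside : gf {h : Q → ℕ // IsPPart (ω ∘ Sum.inr) h} (fun h => ∑ t, h.1 t)
      = PhiP (eMaj Q (ω ∘ Sum.inr)) * DQ := by
    rw [gf_ppart hQ]
    have e1 : ∀ w ∈ linExts Q (Fintype.card Q),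
        gf {g : Fin (Fintype.card Q) → ℕ // CompatW (word (ω ∘ Sum.inr) w) g}
          (fun g => ∑ i, g.1 i)
        = PowerSeries.X ^ majW (word (ω ∘ Sum.inr) w) * DQ := by
      intro w _
      exact gfCompat (Fintype.card Q) (word (ω ∘ Sum.inr) w)
    rw [Finset.sum_congr rfl e1, ← Finset.sum_mul]
    congr 1
    rw [eMaj, map_sum]
    exact (Finset.sum_congr rfl (fun w _ => PhiP_X_pow _)).symm
  -- (4) combine
  have hcomb : PhiP (eMajEndIn (P ⊕ Q) ω {Sum.inl s}) * DN
      = (PhiP (eMajEndIn P (ω ∘ Sum.inl) {s}) * DM) *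
        (PhiP (eMaj Q (ω ∘ Sum.inr)) * DQ) := by
    rw [← hbig, ← hPside, ← hQside]
    exact gf_split ω s hs
  -- cancellation facts
  have h1 : DN * QFs (Fintype.card (P ⊕ Q)) = 1 := gfAnt_mul _
  have h2 : DQ * QFs (Fintype.card Q) = 1 := gfAnt_mul _
  have h3 : DM * (QFs (Fintype.card P - 1) *
      (1 - (PowerSeries.X : PowerSeries ℤ) ^ (Fintype.card P + Fintype.card Q))) = 1 :=
    gfAntMod_mul' (Fintype.card P) (Fintype.card Q) hp0
  have h3' : DM * (QFs (Fintype.card P - 1) *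
      (1 - (PowerSeries.X : PowerSeries ℤ) ^ (Fintype.card (P ⊕ Q)))) = 1 := by
    rw [hcard]; exact h3
  have hqf : PhiP (qBinom (Fintype.card (P ⊕ Q) - 1) (Fintype.card P - 1)) *
      (QFs (Fintype.card P - 1) * QFs (Fintype.card Q)) *
      (1 - (PowerSeries.X : PowerSeries ℤ) ^ (Fintype.card (P ⊕ Q)))
      = QFs (Fintype.card (P ⊕ Q)) := by
    have hid := qfac_identity (Fintype.card P - 1 + Fintype.card Q)
      (Fintype.card P - 1) (Fintype.card Q) rfl
    have hnm : Fintype.card (P ⊕ Q) - 1 = Fintype.card P - 1 + Fintype.card Q := by omega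
    have hqq : qfacP (Fintype.card (P ⊕ Q))
        = qfacP (Fintype.card (P ⊕ Q) - 1) *
          (1 - Polynomial.X ^ (Fintype.card (P ⊕ Q))) := by
      obtain ⟨m, hm⟩ : ∃ m, Fintype.card (P ⊕ Q) = m + 1 := ⟨Fintype.card (P ⊕ Q) - 1, by omega⟩
      rw [hm]
      show qfacP m * (1 - Polynomial.X ^ (m + 1)) = _
      have : m + 1 - 1 = m := by omega
      rw [this]
    have key : qBinom (Fintype.card (P ⊕ Q) - 1) (Fintype.card P - 1) *
        (qfacP (Fintype.card P - 1) * qfacP (Fintype.card Q)) *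
        (1 - Polynomial.X ^ (Fintype.card (P ⊕ Q)))
        = qfacP (Fintype.card (P ⊕ Q)) := by
      rw [hqq, hnm, hid]
    calc PhiP (qBinom (Fintype.card (P ⊕ Q) - 1) (Fintype.card P - 1)) *
        (QFs (Fintype.card P - 1) * QFs (Fintype.card Q)) *
        (1 - (PowerSeries.X : PowerSeries ℤ) ^ (Fintype.card (P ⊕ Q)))
        = PhiP (qBinom (Fintype.card (P ⊕ Q) - 1) (Fintype.card P - 1) *
            (qfacP (Fintype.card P - 1) * qfacP (Fintype.card Q)) *
            (1 - Polynomial.X ^ (Fintype.card (P ⊕ Q)))) := by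
          rw [map_mul, map_mul, map_mul, map_sub, map_one, PhiP_X_pow, PhiP_qfac, PhiP_qfac]
      _ = PhiP (qfacP (Fintype.card (P ⊕ Q))) := by rw [key]
      _ = QFs (Fintype.card (P ⊕ Q)) := PhiP_qfac _
  apply PhiP_inj
  rw [map_mul, map_mul]
  set L := PhiP (eMajEndIn (P ⊕ Q) ω {Sum.inl s}) with hL
  set A := PhiP (eMajEndIn P (ω ∘ Sum.inl) {s}) with hA
  set B := PhiP (eMaj Q (ω ∘ Sum.inr)) with hB
  set C := PhiP (qBinom (Fintype.card (P ⊕ Q) - 1) (Fintype.card P - 1)) with hC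
  calc L = L * (DN * QFs (Fintype.card (P ⊕ Q))) := by rw [h1, mul_one]
    _ = (L * DN) * QFs (Fintype.card (P ⊕ Q)) := by ring
    _ = ((A * DM) * (B * DQ)) * QFs (Fintype.card (P ⊕ Q)) := by rw [hcomb]
    _ = ((A * DM) * (B * DQ)) *
        (C * (QFs (Fintype.card P - 1) * QFs (Fintype.card Q)) *
          (1 - (PowerSeries.X : PowerSeries ℤ) ^ (Fintype.card (P ⊕ Q)))) := by rw [hqf]
    _ = C * (A * B) *
        ((DM * (QFs (Fintype.card P - 1) *
          (1 - (PowerSeries.X : PowerSeries ℤ) ^ (Fintype.card (P ⊕ Q))))) *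
          (DQ * QFs (Fintype.card Q))) := by ring
    _ = C * (A * B) := by rw [h3', h2, mul_one, mul_one]
end

section
/- Let (P+Q,ω) be a labeled disjoint union of posets with |P| = p, |P+Q| = n, and s ∈ P with ω(s) > ω(t) for all t ∈ Q. Then as formal power series, (1 − q^n)·G_{P+Q;s}(q) = (1 − q^p)·G_{P;s}(q)·G_Q(q), where G_{R;s}(q) is the generating function for (R,ω;s)-partitions by size and G_Q(q) the generating function for Q-partitions by size. -/
/-!
Subtracting `1` from every part is a bijection from the `(P,ω;s)`-partitions with `f(s) > 0` onto
all `(P,ω;s)`-partitions, lowering the size by `|P|`; hence `(1 - q^|P|)·G_{P;s}` counts those with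
`f(s) = 0`. Once `f(s) = 0` the minimality condition on `P + Q` is automatic, and since `ω(s)`
exceeds every label of `Q`, ties `f(t) = 0` with `t ∈ Q` are allowed. So a `(P+Q,ω;s)`-partition
with `f(s) = 0` is just a `(P,ω;s)`-partition with `f(s) = 0` next to an arbitrary `Q`-partition,
and the generating functions multiply.
-/

open Finset Polynomial
open scoped Classical

noncomputable def partsOfSize (α : Type) [Fintype α] (pred : (α → ℕ) → Prop) (m : ℕ) :
    Finset (α → ℕ) :=
  (Fintype.piFinset fun _ : α => range (m + 1)).filter fun f => pred f ∧ ∑ t, f t = m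

section GPart

variable {α β : Type} [Fintype α] [Fintype β]

lemma mem_partsOfSize {pred : (α → ℕ) → Prop} {m : ℕ} {f : α → ℕ} :
    f ∈ partsOfSize α pred m ↔ pred f ∧ ∑ t, f t = m := by
  simp only [partsOfSize, mem_filter, Fintype.mem_piFinset, mem_range, and_iff_right_iff_imp]
  rintro ⟨-, rfl⟩ t
  exact Nat.lt_succ_of_le (single_le_sum (fun _ _ => Nat.zero_le _) (mem_univ t))

lemma coeff_GPart (pred : (α → ℕ) → Prop) (m : ℕ) :
    PowerSeries.coeff m (GPart α pred) = (partsOfSize α pred m).card := by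
  have : {f : α → ℕ | pred f ∧ ∑ t, f t = m} = ↑(partsOfSize α pred m) := by
    ext f; simp [mem_partsOfSize]
  rw [GPart, PowerSeries.coeff_mk, this, Set.ncard_coe_finset]

lemma GPart_eq_add (pred p : (α → ℕ) → Prop) :
    GPart α pred = GPart α (fun f => pred f ∧ p f) + GPart α (fun f => pred f ∧ ¬ p f) := by
  ext m
  have hpos : (partsOfSize α pred m).filter p = partsOfSize α (fun f => pred f ∧ p f) m := by
    ext f; simp only [mem_filter, mem_partsOfSize]; tauto
  have hneg : (partsOfSize α pred m).filter (¬ p ·) =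
      partsOfSize α (fun f => pred f ∧ ¬ p f) m := by
    ext f; simp only [mem_filter, mem_partsOfSize]; tauto
  simp only [map_add, coeff_GPart, ← hpos, ← hneg]
  exact_mod_cast (card_filter_add_card_filter_not p).symm

lemma card_partsOfSize_pos (pred : (α → ℕ) → Prop)
    (hshift : ∀ g, pred (fun t => g t + 1) ↔ pred g) (m : ℕ) :
    (partsOfSize α (fun f => pred f ∧ ∀ t, 0 < f t) (m + Fintype.card α)).card =
      (partsOfSize α pred m).card := by
  have hsum : ∀ g : α → ℕ, ∑ t, (g t + 1) = ∑ t, g t + Fintype.card α := fun g => by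
    simp [sum_add_distrib]
  refine card_nbij' (fun f t => f t - 1) (fun g t => g t + 1) ?_ ?_ ?_ ?_
  · rintro f hf
    simp only [mem_coe, mem_partsOfSize] at hf ⊢
    obtain ⟨⟨hf, hpos⟩, hsize⟩ := hf
    have hf_eq : (fun t => (f t - 1) + 1) = f := funext fun t => Nat.sub_add_cancel (hpos t)
    rw [← hf_eq, hshift] at hf
    rw [← hf_eq, hsum] at hsize
    exact ⟨hf, by omega⟩
  · rintro g hg
    simp only [mem_coe, mem_partsOfSize] at hg ⊢
    exact ⟨⟨(hshift g).2 hg.1, fun _ => Nat.succ_pos _⟩, by rw [hsum, hg.2]⟩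
  · rintro f hf
    simp only [mem_coe, mem_partsOfSize] at hf
    funext t; exact Nat.sub_add_cancel (hf.1.2 t)
  · intro g _; funext t; exact Nat.add_sub_cancel _ _

lemma X_pow_card_mul_GPart (pred : (α → ℕ) → Prop)
    (hshift : ∀ g, pred (fun t => g t + 1) ↔ pred g) :
    PowerSeries.X ^ Fintype.card α * GPart α pred =
      GPart α (fun f => pred f ∧ ∀ t, 0 < f t) := by
  ext m
  simp only [PowerSeries.coeff_X_pow_mul', coeff_GPart]
  split_ifs with hm
  · obtain ⟨k, rfl⟩ := Nat.exists_eq_add_of_le' hm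
    rw [Nat.add_sub_cancel, card_partsOfSize_pos pred hshift]
  · rw [eq_comm, Nat.cast_eq_zero, card_eq_zero, eq_empty_iff_forall_notMem]
    intro f hf
    rw [mem_partsOfSize] at hf
    have : Fintype.card α • 1 ≤ ∑ t, f t := card_nsmul_le_sum univ f 1 fun t _ => hf.1.2 t
    simp only [smul_eq_mul, mul_one, hf.2] at this
    exact hm this

lemma one_sub_X_pow_card_mul_GPart (pred : (α → ℕ) → Prop) (s : α)
    (hmin : ∀ f, pred f → ∀ t, f s ≤ f t)
    (hshift : ∀ g, pred (fun t => g t + 1) ↔ pred g) :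
    (1 - PowerSeries.X ^ Fintype.card α) * GPart α pred = GPart α (fun f => pred f ∧ f s = 0) := by
  have hpos : ∀ f, pred f → ((∀ t, 0 < f t) ↔ f s ≠ 0) := fun f hf =>
    ⟨fun h => (h s).ne', fun h t => (Nat.pos_of_ne_zero h).trans_le (hmin f hf t)⟩
  rw [sub_mul, one_mul, X_pow_card_mul_GPart pred hshift, GPart_eq_add pred (∀ t, 0 < · t),
    add_sub_cancel_left]
  congr 1
  ext f
  by_cases hf : pred f <;> simp [hf, hpos]

lemma card_partsOfSize_sum (p : (α → ℕ) → Prop) (q : (β → ℕ) → Prop) (m : ℕ) :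
    (partsOfSize (α ⊕ β) (fun f => p (f ∘ Sum.inl) ∧ q (f ∘ Sum.inr)) m).card =
      ∑ ab ∈ antidiagonal m, (partsOfSize α p ab.1).card * (partsOfSize β q ab.2).card := by
  simp_rw [← card_product]
  rw [← card_sigma]
  refine card_nbij' (fun f => ⟨(∑ t, f (Sum.inl t), ∑ t, f (Sum.inr t)), (f ∘ Sum.inl, f ∘ Sum.inr)⟩)
    (fun x => Sum.elim x.2.1 x.2.2) ?_ ?_ ?_ ?_
  · rintro f hf
    simp only [mem_coe, mem_partsOfSize, mem_sigma, HasAntidiagonal.mem_antidiagonal,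
      mem_product] at hf ⊢
    exact ⟨(Fintype.sum_sum_type f).symm.trans hf.2, ⟨hf.1.1, rfl⟩, hf.1.2, rfl⟩
  · rintro ⟨⟨a, b⟩, g, h⟩ hx
    simp only [mem_coe, mem_partsOfSize, mem_sigma, HasAntidiagonal.mem_antidiagonal,
      mem_product] at hx ⊢
    obtain ⟨rfl, ⟨hg, rfl⟩, hh, rfl⟩ := hx
    exact ⟨⟨hg, hh⟩, Fintype.sum_sum_type _⟩
  · intro f _
    exact Sum.elim_comp_inl_inr f
  · rintro ⟨⟨a, b⟩, g, h⟩ hx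
    simp only [mem_coe, mem_partsOfSize, mem_sigma, HasAntidiagonal.mem_antidiagonal,
      mem_product] at hx
    obtain ⟨-, ⟨-, rfl⟩, -, rfl⟩ := hx
    rfl

lemma GPart_sum (p : (α → ℕ) → Prop) (q : (β → ℕ) → Prop) :
    GPart (α ⊕ β) (fun f => p (f ∘ Sum.inl) ∧ q (f ∘ Sum.inr)) = GPart α p * GPart β q := by
  ext m
  simp only [PowerSeries.coeff_mul, coeff_GPart, card_partsOfSize_sum]
  push_cast
  rfl

end GPart
section PPartition

variable {α β : Type} [PartialOrder α] [PartialOrder β]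

lemma isPPartS_add_one_iff {ω : α → ℕ} {s : α} {f : α → ℕ} :
    IsPPartS ω s (fun t => f t + 1) ↔ IsPPartS ω s f := by
  simp [IsPPartS, IsPPart]

lemma isPPart_sum_iff {ω : α ⊕ β → ℕ} {f : α ⊕ β → ℕ} :
    IsPPart ω f ↔ IsPPart (ω ∘ Sum.inl) (f ∘ Sum.inl) ∧ IsPPart (ω ∘ Sum.inr) (f ∘ Sum.inr) := by
  refine ⟨fun hf => ⟨fun a b hab => hf _ _ (Sum.inl_le_inl_iff.2 hab),
    fun a b hab => hf _ _ (Sum.inr_le_inr_iff.2 hab)⟩, fun ⟨hl, hr⟩ => ?_⟩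
  rintro (a | a) (b | b) hab
  · exact hl a b (Sum.inl_le_inl_iff.1 hab)
  · exact absurd hab Sum.not_inl_le_inr
  · exact absurd hab Sum.not_inr_le_inl
  · exact hr a b (Sum.inr_le_inr_iff.1 hab)

lemma isPPartS_inl_and_eq_zero_iff {ω : α ⊕ β → ℕ} {s : α}
    (hs : ∀ t : β, ω (Sum.inr t) < ω (Sum.inl s)) {f : α ⊕ β → ℕ} :
    IsPPartS ω (Sum.inl s) f ∧ f (Sum.inl s) = 0 ↔
      (IsPPartS (ω ∘ Sum.inl) s (f ∘ Sum.inl) ∧ f (Sum.inl s) = 0) ∧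
        IsPPart (ω ∘ Sum.inr) (f ∘ Sum.inr) := by
  simp only [IsPPartS, isPPart_sum_iff, Sum.forall, Function.comp_apply, ne_eq, Sum.inl.injEq,
    reduceCtorEq, not_false_eq_true, forall_const]
  constructor
  · rintro ⟨⟨⟨hl, hr⟩, ⟨hminl, -⟩, htiel, -⟩, h0⟩
    exact ⟨⟨⟨hl, hminl, htiel⟩, h0⟩, hr⟩
  · rintro ⟨⟨⟨hl, hminl, htiel⟩, h0⟩, hr⟩
    exact ⟨⟨⟨hl, hr⟩, ⟨hminl, fun t => h0 ▸ Nat.zero_le _⟩, htiel, fun t _ => hs t⟩, h0⟩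

end PPartition

theorem GPartS_sum_poset_general (P Q : Type) [Fintype P] [Fintype Q] [PartialOrder P]
    [PartialOrder Q] (ω : P ⊕ Q → ℕ) (s : P)
    (hs : ∀ t : Q, ω (Sum.inr t) < ω (Sum.inl s)) :
    (1 - (PowerSeries.X : PowerSeries ℚ) ^ Fintype.card (P ⊕ Q)) *
        GPart (P ⊕ Q) (IsPPartS ω (Sum.inl s)) =
      (1 - (PowerSeries.X : PowerSeries ℚ) ^ Fintype.card P) *
          GPart P (IsPPartS (ω ∘ Sum.inl) s) *
        GPart Q (IsPPart (ω ∘ Sum.inr)) := by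
  rw [one_sub_X_pow_card_mul_GPart (IsPPartS ω (Sum.inl s)) (Sum.inl s) (fun _ hf => hf.2.1)
      fun _ => isPPartS_add_one_iff,
    one_sub_X_pow_card_mul_GPart (IsPPartS (ω ∘ Sum.inl) s) s (fun _ hf => hf.2.1)
      fun _ => isPPartS_add_one_iff,
    ← GPart_sum]
  congr 1
  ext f
  exact isPPartS_inl_and_eq_zero_iff hs

/-- For a labeled disjoint union `P + Q` with `s ∈ P` whose label exceeds every
label of `Q`: `(1 - q^n)·G_{P+Q;s}(q) = (1 - q^p)·G_{P;s}(q)·G_Q(q)`. -/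
theorem GPartS_sum_poset (P Q : Type) [Fintype P] [Fintype Q] [PartialOrder P]
    [PartialOrder Q] (ω : P ⊕ Q → ℕ) (hinj : Function.Injective ω) (s : P)
    (hs : ∀ t : Q, ω (Sum.inr t) < ω (Sum.inl s)) :
    (1 - (PowerSeries.X : PowerSeries ℚ) ^ Fintype.card (P ⊕ Q)) *
        GPart (P ⊕ Q) (IsPPartS ω (Sum.inl s)) =
      (1 - (PowerSeries.X : PowerSeries ℚ) ^ Fintype.card P) *
          GPart P (IsPPartS (ω ∘ Sum.inl) s) *
        GPart Q (IsPPart (ω ∘ Sum.inr)) :=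
  GPartS_sum_poset_general P Q ω s hs
end

section
/- Foata's bijection φ : S_n → S_n satisfies Des(w^{-1}) = Des(φ(w)^{-1}) for all w ∈ S_n. -/
/-!
The letter `i` is a descent of `σ⁻¹` exactly when `i + 1` precedes `i` in the word of `σ`, so
it suffices that every Foata step preserves the relative order of the letters `i` and `i + 1`.
A step inserting `a` cuts `γ` into compartments ending at the letters on one side of `a` and
moves each final letter in front of the rest of its compartment, whose letters lie on the other
side of `a`; hence two letters on the same side of `a` never change order. If `a ∉ {i, i + 1}`,
then `i` and `i + 1` lie on the same side of `a`; otherwise at most one of them occurs in `γ`.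
-/

open Finset Polynomial
open scoped Classical

/-- Helper for Foata's bijection: split the list into compartments ending at
each letter satisfying `c`, and cyclically shift each compartment one position
to the right.  The first argument accumulates the current compartment
(in reverse). -/
def foataShift (c : ℕ → Bool) : List ℕ → List ℕ → List ℕ
  | acc, [] => acc.reverse
  | acc, x :: xs =>
    if c x then x :: (acc.reverse ++ foataShift c [] xs)
    else foataShift c (x :: acc) xs

/-- One step of Foata's bijection: incorporate the next letter `a` into the
already-built word `γ`.  If the last letter of `γ` is greater than `a`, split
`γ` after each letter greater than `a`; otherwise split after each letter
smaller than `a`; cyclically shift each compartment to the right and append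
`a`. -/
def foataStep (a : ℕ) (γ : List ℕ) : List ℕ :=
  match γ.getLast? with
  | none => [a]
  | some b =>
    (if a < b then foataShift (fun x => decide (a < x)) [] γ
     else foataShift (fun x => decide (x < a)) [] γ) ++ [a]

/-- Foata's bijection on words. -/
def foata (w : List ℕ) : List ℕ := w.foldl (fun γ a => foataStep a γ) []

/-- The descent set of a permutation `σ` of `Fin n`, viewed as the word
`σ(0) σ(1) ⋯ σ(n-1)`. -/
def desSet {n : ℕ} (σ : Equiv.Perm (Fin n)) : Set (Fin n) :=
  {i | ∃ h : (i : ℕ) + 1 < n, σ ⟨(i : ℕ) + 1, h⟩ < σ i}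

theorem List.Perm.eq_of_forall_mem_eq {α : Type*} {l₁ l₂ : List α} {y : α} (h : l₁.Perm l₂)
    (hy : ∀ z ∈ l₂, z = y) : l₁ = l₂ := by
  rw [List.eq_replicate_iff.2 ⟨rfl, hy⟩] at h ⊢
  exact List.perm_replicate.1 h

theorem List.pair_sublist_filter_iff {α : Type*} {p : α → Bool} {u v : α} {l : List α}
    (hu : p u) (hv : p v) : [u, v].Sublist (l.filter p) ↔ [u, v].Sublist l := by
  refine ⟨fun h => h.trans List.filter_sublist, fun h => ?_⟩
  simpa [hu, hv] using h.filter p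

theorem List.pair_sublist_finRange_iff {n : ℕ} {j k : Fin n} :
    [j, k].Sublist (List.finRange n) ↔ j < k := by
  refine ⟨fun h => by simpa using (List.sortedLT_finRange n).pairwise.sublist h, fun hjk => ?_⟩
  exact List.sublist_of_subperm_of_sortedLE
    (List.Nodup.subperm (by simpa using hjk.ne) (by simp))
    (List.Pairwise.sortedLE (by simpa using hjk.le)) (List.sortedLT_finRange n).sortedLE

theorem List.pair_sublist_ofFn_iff {α : Type*} {n : ℕ} {f : Fin n → α}
    (hf : Function.Injective f) {j k : Fin n} : [f j, f k].Sublist (List.ofFn f) ↔ j < k := by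
  rw [List.ofFn_eq_map, ← List.pair_sublist_finRange_iff]
  refine ⟨fun h => ?_, fun h => h.map f⟩
  obtain ⟨l, hl, hfl⟩ := List.sublist_map_iff.1 h
  have hl' : l = [j, k] := List.map_injective_iff.2 hf (hfl.symm : l.map f = [j, k].map f)
  rwa [hl'] at hl

theorem foataShift_perm (c : ℕ → Bool) :
    ∀ l acc : List ℕ, (foataShift c acc l).Perm (acc.reverse ++ l)
  | [], acc => by simp [foataShift]
  | x :: xs, acc => by
    rw [foataShift]
    split
    · exact ((foataShift_perm c xs []).append_left _).cons x |>.trans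
        (by simpa using List.perm_middle.symm)
    · simpa using foataShift_perm c xs (x :: acc)

theorem filter_foataShift {c p : ℕ → Bool} {b : Bool} (hp : ∀ z, p z → c z = b) :
    ∀ l acc : List ℕ, (∀ z ∈ acc, c z = false) →
      (foataShift c acc l).filter p = (acc.reverse ++ l).filter p
  | [], acc, _ => by simp [foataShift]
  | x :: xs, acc, hacc => by
    rw [foataShift]
    split
    case isTrue hcx =>
      -- `x` overtakes the letters of `acc`, and `p` is false on these when it is true on `x`
      have hmove : (x :: acc.reverse).filter p = (acc.reverse ++ [x]).filter p := by
        by_cases hpx : p x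
        · have hacc_p : acc.reverse.filter p = [] :=
            List.filter_eq_nil_iff.2 fun z hz hpz =>
              absurd (hacc z (List.mem_reverse.1 hz)) (by rw [hp z hpz, ← hp x hpx, hcx]; decide)
          simp [hpx, hacc_p]
        · simp [hpx]
      calc (x :: (acc.reverse ++ foataShift c [] xs)).filter p
          = (x :: acc.reverse).filter p ++ (foataShift c [] xs).filter p := by
            rw [← List.cons_append, List.filter_append]
        _ = (acc.reverse ++ [x]).filter p ++ xs.filter p := by
            rw [hmove, filter_foataShift hp xs [] (by simp)]
            simp
        _ = (acc.reverse ++ x :: xs).filter p := by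
            rw [← List.filter_append, List.append_assoc, List.singleton_append]
    case isFalse hcx =>
      simpa using filter_foataShift hp xs (x :: acc) (by simpa [hcx] using hacc)

theorem foataShift_nil_perm (c : ℕ → Bool) (γ : List ℕ) : (foataShift c [] γ).Perm γ := by
  simpa using foataShift_perm c γ []

theorem foataStep_perm (a : ℕ) (γ : List ℕ) : (foataStep a γ).Perm (γ ++ [a]) := by
  unfold foataStep
  split
  case h_1 hlast => simp [List.getLast?_eq_none_iff.1 hlast]
  case h_2 => split <;> exact (foataShift_nil_perm _ γ).append_right [a]

def adjPair (x z : ℕ) : Bool := decide (z = x ∨ z = x + 1)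

theorem filter_foataShift_adjPair {x a : ℕ} {γ : List ℕ} (ha : a ∉ γ) {c : ℕ → Bool}
    (hc : c = (fun z => decide (a < z)) ∨ c = (fun z => decide (z < a))) :
    (foataShift c [] γ).filter (adjPair x) = γ.filter (adjPair x) := by
  by_cases hxa : adjPair x a
  · -- only one of `x`, `x + 1` can occur in `γ`
    refine ((foataShift_nil_perm c γ).filter _).eq_of_forall_mem_eq
      (y := if a = x then x + 1 else x) fun z hz => ?_
    have hza : z ≠ a := fun h => ha (h ▸ List.mem_of_mem_filter hz)
    have hzx := List.of_mem_filter hz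
    simp only [adjPair, decide_eq_true_eq] at hxa hzx
    split_ifs <;> omega
  · -- `x` and `x + 1` lie on the same side of `a`
    have hcx : ∀ z, adjPair x z → c z = c x := by
      simp only [adjPair, decide_eq_true_eq] at hxa ⊢
      rcases hc with rfl | rfl <;> intro z hz <;> simp only [decide_eq_decide] <;> omega
    simpa using filter_foataShift hcx γ [] (by simp)

theorem filter_foataStep_adjPair (x : ℕ) {a : ℕ} {γ : List ℕ} (ha : a ∉ γ) :
    (foataStep a γ).filter (adjPair x) = (γ ++ [a]).filter (adjPair x) := by
  unfold foataStep
  split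
  case h_1 hlast => simp [List.getLast?_eq_none_iff.1 hlast]
  case h_2 =>
    rw [List.filter_append, List.filter_append]
    split <;> rw [filter_foataShift_adjPair ha (by simp)]

theorem filter_foldl_foataStep_adjPair (x : ℕ) :
    ∀ w γ : List ℕ, (γ ++ w).Nodup →
      (w.foldl (fun γ a => foataStep a γ) γ).filter (adjPair x) = (γ ++ w).filter (adjPair x)
  | [], γ, _ => by simp
  | a :: w, γ, hnodup => by
    have ha : a ∉ γ := fun h => List.disjoint_of_nodup_append hnodup h List.mem_cons_self
    have hnodup' : (foataStep a γ ++ w).Nodup :=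
      ((foataStep_perm a γ).append_right w).nodup_iff.2 (by simpa using hnodup)
    rw [List.foldl_cons, filter_foldl_foataStep_adjPair x w _ hnodup', List.filter_append,
      filter_foataStep_adjPair x ha, ← List.filter_append]
    simp

theorem filter_foata_adjPair (x : ℕ) {w : List ℕ} (hw : w.Nodup) :
    (foata w).filter (adjPair x) = w.filter (adjPair x) := by
  simpa [foata] using filter_foldl_foataStep_adjPair x w [] (by simpa using hw)

theorem mem_desSet_inv_iff {n : ℕ} (σ : Equiv.Perm (Fin n)) (i : Fin n) :
    i ∈ desSet σ⁻¹ ↔ [(i : ℕ) + 1, i].Sublist (List.ofFn fun j => (σ j : ℕ)) := by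
  have hσ : Function.Injective fun j => (σ j : ℕ) := Fin.val_injective.comp σ.injective
  refine ⟨fun ⟨hi, hlt⟩ => by simpa using (List.pair_sublist_ofFn_iff hσ).2 hlt, fun hsub => ?_⟩
  obtain ⟨j, hj⟩ := List.mem_ofFn.1 (hsub.subset List.mem_cons_self)
  have hi : (i : ℕ) + 1 < n := hj ▸ (σ j).isLt
  exact ⟨hi, (List.pair_sublist_ofFn_iff hσ).1 (by simpa using hsub)⟩

/-- Foata's bijection preserves the inverse descent set: if the word of the
permutation `τ` is the image under Foata's bijection of the word of `σ`, then
`Des(σ⁻¹) = Des(τ⁻¹)`. -/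
theorem foata_inverse_descent_set (n : ℕ) (σ τ : Equiv.Perm (Fin n))
    (h : List.ofFn (fun i => ((τ i : ℕ))) =
      foata (List.ofFn fun i => ((σ i : ℕ)))) :
    desSet σ⁻¹ = desSet τ⁻¹ := by
  have hσ : (List.ofFn fun j => (σ j : ℕ)).Nodup :=
    List.nodup_ofFn.2 (Fin.val_injective.comp σ.injective)
  ext i
  have hi₁ : adjPair i (i + 1) := by simp [adjPair]
  have hi₀ : adjPair i i := by simp [adjPair]
  rw [mem_desSet_inv_iff, mem_desSet_inv_iff, h, ← List.pair_sublist_filter_iff hi₁ hi₀,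
    ← List.pair_sublist_filter_iff (l := foata _) hi₁ hi₀, filter_foata_adjPair _ hσ]
end
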